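/- arXiv:1008.3190 — 6 statements merged into one kernel-verified Lean document; each statement's English description precedes it below -/
import Mathlib

section
/- Every tree T with ℓ ≥ 2 leaves has a covering by ⌈ℓ/2⌉ paths that all share a common vertex. -/
/-- A subgraph is a *path subgraph* if it is connected and has maximum degree at most 2. -/
def IsPathSubgraph {V : Type*} {G : SimpleGraph V} (H : G.Subgraph) : Prop :=
  H.Connected ∧ ∀ v : V, (H.neighborSet v).ncard ≤ 2

/-!
Let `v` minimise the total distance to the leaves, and sort the leaves `x ≠ v` into the
branches of the tree at `v`, the branch of `x` being the first step of the path from `v` to `x`.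
Moving from `v` to a neighbour `n` brings every leaf in the branch of `n` one step closer and
moves every other leaf at most one step away, so each branch holds at most `ℓ / 2` leaves.
List the leaves branch after branch and pair the `i`-th entry with the `(i + ⌈ℓ/2⌉)`-th: a
branch is a block of at most `⌈ℓ/2⌉` consecutive entries, so the two leaves of a pair lie in
different branches, and the paths from `v` to them join to a path through `v`. Every edge lies
on the path from `v` to a leaf, namely to the far end of a longest path from `v` through it.
-/

open Finset

theorem List.Pairwise.apply_ne_apply_add {α β : Type*} [LinearOrder β] {f : α → β}
    {l : List α} (hl : l.Pairwise (fun a b => f a ≤ f b)) {k : ℕ}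
    (hk : ∀ b, l.countP (fun a => f a = b) ≤ k) {i : ℕ} (hi : i + k < l.length) :
    f l[i] ≠ f l[i + k] := by
  intro heq
  have hmono : ∀ (j₁ j₂ : ℕ) (h₁ : j₁ < l.length) (h₂ : j₂ < l.length), j₁ ≤ j₂ →
      f l[j₁] ≤ f l[j₂] := by
    intro j₁ j₂ h₁ h₂ hle
    rcases hle.lt_or_eq with hlt | rfl
    · exact List.pairwise_iff_getElem.mp hl j₁ j₂ h₁ h₂ hlt
    · exact le_rfl
  set s := (l.drop i).take (k + 1)
  have hs : ∀ a ∈ s, f a = f l[i] := by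
    intro a ha
    obtain ⟨n, hn, rfl⟩ := List.getElem_of_mem ha
    simp only [s, List.length_take, List.length_drop] at hn
    simp only [s, List.getElem_take, List.getElem_drop]
    exact le_antisymm (heq ▸ hmono _ _ _ _ (by omega)) (hmono _ _ _ _ (by omega))
  have hcount :=
    ((List.take_sublist (k + 1) (l.drop i)).trans (List.drop_sublist i l)).countP_le
      (p := fun a => Decidable.decide (f a = f l[i]))
  rw [List.countP_eq_length.mpr (by simpa using hs)] at hcount
  have := hk (f l[i])
  simp only [List.length_take, List.length_drop] at hcount
  omega

theorem Finset.exists_perm_toList_apply_ne_apply_add {α β : Type*} [DecidableEq β]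
    (S : Finset α) (f : α → β) {k : ℕ} (hk : ∀ b, #{a ∈ S | f a = b} ≤ k) :
    ∃ l : List α, l.Perm S.toList ∧ ∀ i (hi : i + k < l.length), f l[i] ≠ f l[i + k] := by
  let _ : LinearOrder β := IsWellOrder.linearOrder WellOrderingRel
  refine ⟨S.toList.mergeSort (fun a b => f a ≤ f b), List.mergeSort_perm _ _,
    fun i hi => List.Pairwise.apply_ne_apply_add ?_ (fun b => ?_) hi⟩
  · simpa using List.pairwise_mergeSort (le := fun a b => decide (f a ≤ f b))
      (fun a b c hab hbc => by simp only [decide_eq_true_eq] at *; exact hab.trans hbc)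
      (fun a b => by simpa using le_total _ _) S.toList
  · refine le_of_eq_of_le ?_ (hk b)
    rw [(List.mergeSort_perm _ _).countP_eq, Finset.card_def, Finset.filter_val,
      ← Multiset.countP_eq_card_filter, ← Finset.coe_toList, Multiset.coe_countP]
    convert rfl

namespace SimpleGraph

variable {V : Type*} {G : SimpleGraph V}

namespace Walk

theorem IsPath.append {u v w : V} {p : G.Walk u v} {q : G.Walk v w} (hp : p.IsPath)
    (hq : q.IsPath) (h : ∀ x ∈ p.support, x ∈ q.support → x = v) : (p.append q).IsPath := by
  rw [isPath_def, support_append, List.nodup_append]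
  refine ⟨hp.support_nodup, hq.support_nodup.sublist (List.tail_sublist _), ?_⟩
  rintro x hx y hy rfl
  have hq' := hq.support_nodup
  rw [← cons_tail_support] at hq'
  rw [h x hx (List.mem_of_mem_tail hy)] at hy
  exact (List.nodup_cons.mp hq').1 hy

theorem IsPath.ncard_neighborSet_toSubgraph_le_two {u v : V} {p : G.Walk u v} (hp : p.IsPath)
    (w : V) : (p.toSubgraph.neighborSet w).ncard ≤ 2 := by
  by_cases hw : w ∈ p.support ∧ ¬p.Nil
  swap
  · have hempty : p.toSubgraph.neighborSet w = ∅ := Set.eq_empty_of_forall_notMem fun z hz =>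
      hw ⟨p.mem_verts_toSubgraph.mp hz.fst_mem, fun hnil => by
        simpa [edges_eq_nil.mpr hnil] using adj_toSubgraph_iff_mem_edges.mp hz⟩
    simp [hempty]
  obtain ⟨hw, hnil⟩ := hw
  obtain ⟨i, rfl, hi⟩ := mem_support_iff_exists_getVert.mp hw
  rcases Nat.eq_zero_or_pos i with rfl | hi0
  · rw [getVert_zero, hp.neighborSet_toSubgraph_startpoint hnil, Set.ncard_singleton]
    omega
  rcases hi.lt_or_eq with hil | rfl
  · rw [hp.ncard_neighborSet_toSubgraph_internal_eq_two hi0.ne' hil]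
  · rw [getVert_length, hp.neighborSet_toSubgraph_endpoint hnil, Set.ncard_singleton]
    omega

theorem IsPath.isPathSubgraph_toSubgraph {u v : V} {p : G.Walk u v} (hp : p.IsPath) :
    IsPathSubgraph p.toSubgraph :=
  ⟨p.toSubgraph_connected, hp.ncard_neighborSet_toSubgraph_le_two⟩

end Walk

namespace IsTree

open Walk

variable (hT : G.IsTree)

noncomputable def path (u v : V) : G.Walk u v := (hT.existsUnique_path u v).exists.choose

theorem isPath_path (u v : V) : (hT.path u v).IsPath :=
  (hT.existsUnique_path u v).exists.choose_spec

theorem eq_path {u v : V} {p : G.Walk u v} (hp : p.IsPath) : p = hT.path u v :=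
  (hT.existsUnique_path u v).unique hp (hT.isPath_path u v)

theorem path_self (v : V) : hT.path v v = .nil :=
  (hT.eq_path .nil).symm

theorem length_path (u v : V) : (hT.path u v).length = G.dist u v := by
  obtain ⟨p, hp, hlen⟩ := (hT.connected.preconnected u v).exists_path_of_dist
  rw [← hT.eq_path hp, hlen]

theorem snd_path_of_mem_support {v x w : V} (hw : w ∈ (hT.path v x).support) (hwv : w ≠ v) :
    (hT.path v w).snd = (hT.path v x).snd := by
  classical
  rw [← hT.eq_path ((hT.isPath_path v x).takeUntil hw), snd_takeUntil hwv]

theorem isPath_reverse_append_path {v x y : V}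
    (h : y = v ∨ (hT.path v x).snd ≠ (hT.path v y).snd) :
    ((hT.path v x).reverse.append (hT.path v y)).IsPath := by
  refine (hT.isPath_path v x).reverse.append (hT.isPath_path v y) fun w hwx hwy => ?_
  rw [support_reverse, List.mem_reverse] at hwx
  by_contra hwv
  rcases h with rfl | h
  · simp [path_self] at hwy
    exact hwv hwy
  · exact h ((hT.snd_path_of_mem_support hwx hwv).symm.trans
      (hT.snd_path_of_mem_support hwy hwv))

theorem two_mul_card_filter_snd_path_le [DecidableEq V] (L : Finset V) {v : V}
    (hv : ∀ u, ∑ x ∈ L, G.dist v x ≤ ∑ x ∈ L, G.dist u x) (n : V) :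
    2 * #{x ∈ L.erase v | (hT.path v x).snd = n} ≤ #L := by
  let p (x : V) : Prop := x ≠ v ∧ (hT.path v x).snd = n
  have hA : {x ∈ L.erase v | (hT.path v x).snd = n} = {x ∈ L | p x} := by
    ext x
    simp only [p, mem_filter, mem_erase]
    tauto
  rw [hA]
  rcases {x ∈ L | p x}.eq_empty_or_nonempty with hA | ⟨x₀, hx₀⟩
  · simp [hA]
  have hadj : G.Adj v n := by
    obtain ⟨hx₀v, rfl⟩ := (mem_filter.mp hx₀).2
    exact adj_snd fun hnil => hx₀v hnil.eq.symm
  have key : ∀ x ∈ L,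
      G.dist n x + (if p x then 1 else 0) ≤ G.dist v x + (if ¬p x then 1 else 0) := by
    intro x _
    split_ifs with hx <;> try contradiction
    · obtain ⟨hxv, rfl⟩ := hx
      have hnil : ¬(hT.path v x).Nil := fun hnil => hxv hnil.eq.symm
      calc G.dist (hT.path v x).snd x + 1 ≤ (hT.path v x).tail.length + 1 := by
            gcongr; exact dist_le _
        _ = G.dist v x := by rw [length_tail_add_one hnil, length_path]
    · calc G.dist n x ≤ G.dist n v + G.dist v x := hT.connected.dist_triangle
        _ = G.dist v x + 1 := by rw [dist_comm, dist_eq_one_iff_adj.mpr hadj, add_comm]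
  have hsum := sum_le_sum key
  rw [sum_add_distrib, sum_add_distrib, ← card_filter, ← card_filter] at hsum
  have := hv n
  have := card_filter_add_card_filter_not (s := L) (fun x => p x)
  omega

theorem exists_mem_edges_path (v : V) {e : Sym2 V} (he : e ∈ G.edgeSet) :
    ∃ x, e ∈ (hT.path v x).edges := by
  induction e with | h a b => ?_
  rw [mem_edgeSet] at he
  by_cases ha : a ∈ (hT.path v b).support
  · refine ⟨b, ?_⟩
    rw [hT.isAcyclic.path_concat (hT.isPath_path v a) (hT.isPath_path v b) he ha, edges_concat]
    simp
  · have hb := hT.isAcyclic.mem_support_of_ne_mem_support_of_adj_of_isPath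
      (hT.isPath_path v a) (hT.isPath_path v b) he ha
    refine ⟨a, ?_⟩
    rw [hT.isAcyclic.path_concat (hT.isPath_path v b) (hT.isPath_path v a) he.symm hb,
      edges_concat]
    simp [Sym2.eq_swap]

theorem exists_leaf_mem_edges_path [Finite V] (v : V) {e : Sym2 V} (he : e ∈ G.edgeSet) :
    ∃ x, x ≠ v ∧ (G.neighborSet x).ncard = 1 ∧ e ∈ (hT.path v x).edges := by
  obtain ⟨x, hx, hmax⟩ := Set.exists_max_image {x | e ∈ (hT.path v x).edges}
    (fun x => (hT.path v x).length) (Set.toFinite _) (hT.exists_mem_edges_path v he)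
  have hnil : ¬(hT.path v x).Nil := fun hnil => by
    simp [edges_eq_nil.mpr hnil] at hx
  refine ⟨x, fun hxv => hnil (by subst hxv; simp [path_self]), ?_, hx⟩
  suffices G.neighborSet x = {(hT.path v x).penultimate} by rw [this, Set.ncard_singleton]
  ext y
  simp only [mem_neighborSet, Set.mem_singleton_iff]
  refine ⟨fun hy => ?_, fun hy => hy ▸ (adj_penultimate hnil).symm⟩
  by_cases hys : y ∈ (hT.path v x).support
  · exact hT.isAcyclic.eq_penultimate_of_adj_end (hT.isPath_path v x) hy hys
  · have hpy := hT.eq_path ((hT.isPath_path v x).concat hys hy)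
    have hle := hmax y (by
      rw [Set.mem_ofPred_eq, ← hpy, edges_concat, List.concat_eq_append]
      exact List.mem_append_left _ hx)
    rw [← hpy, length_concat] at hle
    omega

theorem exists_pathCover_of_list (v : V) {k : ℕ} (l : List V) (hlen : l.length ≤ 2 * k)
    (hsep : ∀ i (hi : i + k < l.length), (hT.path v l[i]).snd ≠ (hT.path v l[i + k]).snd)
    (hcover : ∀ e ∈ G.edgeSet, ∃ x ∈ l, e ∈ (hT.path v x).edges) :
    ∃ F : Fin k → G.Subgraph, (∀ i, IsPathSubgraph (F i)) ∧
      (∀ e ∈ G.edgeSet, ∃ i, e ∈ (F i).edgeSet) ∧ ∀ i, v ∈ (F i).verts := by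
  -- Entries missing at the end of `l` are replaced by `v`, whose path to `v` is trivial.
  refine ⟨fun i => ((hT.path v (l.getD i v)).reverse.append
    (hT.path v (l.getD (i + k) v))).toSubgraph, fun i => ?_, fun e he => ?_, fun i => ?_⟩
  · refine (hT.isPath_reverse_append_path ?_).isPathSubgraph_toSubgraph
    by_cases hi : i + k < l.length
    · right
      rw [List.getD_eq_getElem _ _ (by omega), List.getD_eq_getElem _ _ hi]
      exact hsep i hi
    · exact .inl (List.getD_eq_default _ _ (by omega))
  · obtain ⟨x, hxl, hex⟩ := hcover e he
    obtain ⟨j, hj, rfl⟩ := List.getElem_of_mem hxl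
    rcases lt_or_ge j k with hjk | hjk
    · refine ⟨⟨j, hjk⟩, ?_⟩
      simp only [mem_edges_toSubgraph, edges_append, edges_reverse, List.mem_append,
        List.mem_reverse]
      left
      rwa [List.getD_eq_getElem _ _ hj]
    · refine ⟨⟨j - k, by omega⟩, ?_⟩
      simp only [mem_edges_toSubgraph, edges_append, List.mem_append]
      right
      rwa [Nat.sub_add_cancel hjk, List.getD_eq_getElem _ _ hj]
  · rw [mem_verts_toSubgraph, mem_support_append_iff]
    exact .inr (start_mem_support _)

end IsTree
end SimpleGraph

open SimpleGraph

theorem pathCover_common_vertex_general {V : Type*} [Fintype V] (G : SimpleGraph V)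
    (hT : G.IsTree) (ℓ : ℕ)
    (hℓ : ℓ = {v : V | (G.neighborSet v).ncard = 1}.ncard) :
    ∃ F : Fin ((ℓ + 1) / 2) → G.Subgraph,
      (∀ i, IsPathSubgraph (F i)) ∧
      (∀ e ∈ G.edgeSet, ∃ i, e ∈ (F i).edgeSet) ∧
      ∃ v : V, ∀ i, v ∈ (F i).verts := by
  classical
  set L : Finset V := {x | (G.neighborSet x).ncard = 1}
  have hL : #L = ℓ := by rw [hℓ, ← Set.ncard_coe_finset]; simp [L]
  have := hT.connected.nonempty
  obtain ⟨v, -, hv⟩ := univ.exists_min_image (fun u => ∑ x ∈ L, G.dist u x) univ_nonempty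
  obtain ⟨l, hl, hsep⟩ := (L.erase v).exists_perm_toList_apply_ne_apply_add
    (fun x => (hT.path v x).snd) (k := (ℓ + 1) / 2) fun n => by
      have := hT.two_mul_card_filter_snd_path_le L (fun u => hv u (mem_univ u)) n
      omega
  have hlen : l.length ≤ 2 * ((ℓ + 1) / 2) := by
    rw [hl.length_eq, length_toList]
    have := card_erase_le (s := L) (a := v)
    omega
  obtain ⟨F, hF, hcover, hvF⟩ := hT.exists_pathCover_of_list v l hlen hsep fun e he => by
    obtain ⟨x, hxv, hx, hex⟩ := hT.exists_leaf_mem_edges_path v he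
    exact ⟨x, hl.mem_iff.mpr (by simpa [L, hxv] using hx), hex⟩
  exact ⟨F, hF, hcover, v, hvF⟩

/-- Every tree `T` with `ℓ ≥ 2` leaves has a covering by `⌈ℓ/2⌉`
paths that all share a common vertex. -/
theorem pathCover_common_vertex {V : Type*} [Fintype V] (G : SimpleGraph V)
    (hT : G.IsTree) (ℓ : ℕ)
    (hℓ : ℓ = {v : V | (G.neighborSet v).ncard = 1}.ncard) (hℓ2 : 2 ≤ ℓ) :
    ∃ F : Fin ((ℓ + 1) / 2) → G.Subgraph,
      (∀ i, IsPathSubgraph (F i)) ∧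
      (∀ e ∈ G.edgeSet, ∃ i, e ∈ (F i).edgeSet) ∧
      ∃ v : V, ∀ i, v ∈ (F i).verts :=
  pathCover_common_vertex_general G hT ℓ hℓ
end

section
/- Define recursively ⌈x⌉⁰ := 1 and ⌈x⌉ᵏ := ⌈x · ⌈x⌉^{k−1}⌉ for real x > 0 and integer k ≥ 1. Then for all x > 0 and k ≥ 0: xᵏ ≤ ⌈x⌉ᵏ_rec ≤ ⌈x⌉ᵏ, and moreover ⌈x⌉ᵏ_rec ≤ (x^{k+1} − 1)/(x − 1) when x > 1. -/
/-!
Every bound follows by induction on `k` from `y ≤ ⌈y⌉ < y + 1` applied to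
`y = x · ⌈x⌉ᵏ_rec`. For the two power bounds one multiplies the induction hypothesis by `x`,
resp. by `⌈x⌉ ≥ x`; for the last bound the `+ 1` lost in each rounding accumulates to the geometric sum
`∑_{i ≤ k} xⁱ = (x^{k+1} − 1)/(x − 1)`.
-/

open Finset

/-- The iterated ceiling power: `⌈x⌉⁰ := 1` and `⌈x⌉ᵏ := ⌈x · ⌈x⌉^{k−1}⌉`. -/
noncomputable def iterCeil (x : ℝ) : ℕ → ℤ
  | 0 => 1
  | k + 1 => ⌈x * (iterCeil x k : ℝ)⌉

section

variable {x : ℝ}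

@[simp]
lemma iterCeil_zero (x : ℝ) : iterCeil x 0 = 1 := rfl

lemma iterCeil_succ (x : ℝ) (k : ℕ) : iterCeil x (k + 1) = ⌈x * (iterCeil x k : ℝ)⌉ := rfl

lemma pow_le_iterCeil (hx : 0 ≤ x) (k : ℕ) : x ^ k ≤ (iterCeil x k : ℝ) := by
  induction k with
  | zero => simp
  | succ k ih =>
    calc x ^ (k + 1) = x * x ^ k := pow_succ' x k
      _ ≤ x * (iterCeil x k : ℝ) := mul_le_mul_of_nonneg_left ih hx
      _ ≤ (iterCeil x (k + 1) : ℝ) := Int.le_ceil _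

lemma iterCeil_le_ceil_pow (hx : 0 ≤ x) (k : ℕ) : iterCeil x k ≤ ⌈x⌉ ^ k := by
  induction k with
  | zero => simp
  | succ k ih =>
    have hc : (0 : ℝ) ≤ iterCeil x k := (pow_nonneg hx k).trans (pow_le_iterCeil hx k)
    rw [iterCeil_succ, Int.ceil_le, pow_succ', Int.cast_mul, Int.cast_pow]
    exact mul_le_mul (Int.le_ceil x) (by exact_mod_cast ih) hc (by positivity)

lemma iterCeil_le_geom_sum (hx : 0 ≤ x) (k : ℕ) :
    (iterCeil x k : ℝ) ≤ ∑ i ∈ range (k + 1), x ^ i := by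
  induction k with
  | zero => simp
  | succ k ih =>
    calc (iterCeil x (k + 1) : ℝ) ≤ x * (iterCeil x k : ℝ) + 1 :=
          (Int.ceil_lt_add_one _).le
      _ ≤ x * ∑ i ∈ range (k + 1), x ^ i + 1 := by gcongr
      _ = ∑ i ∈ range (k + 2), x ^ i := geom_sum_succ.symm

end

/-- For all real `x > 0` and integers `k ≥ 0`:
`xᵏ ≤ ⌈x⌉ᵏ_rec ≤ ⌈x⌉ᵏ`, and moreover `⌈x⌉ᵏ_rec ≤ (x^{k+1} − 1)/(x − 1)` when `x > 1`. -/
theorem iterCeil_bounds (x : ℝ) (hx : 0 < x) (k : ℕ) :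
    x ^ k ≤ (iterCeil x k : ℝ) ∧
    (iterCeil x k : ℝ) ≤ ((⌈x⌉ : ℝ)) ^ k ∧
    (1 < x → (iterCeil x k : ℝ) ≤ (x ^ (k + 1) - 1) / (x - 1)) := by
  refine ⟨pow_le_iterCeil hx.le k, by exact_mod_cast iterCeil_le_ceil_pow hx.le k, fun h1 => ?_⟩
  rw [← geom_sum_eq h1.ne']
  exact iterCeil_le_geom_sum hx.le k
end

section
/- For all integers Δ ≥ d ≥ 3, every caterpillar of maximum degree at most Δ has a covering by ⌈(Δ−2)/(d−2)⌉ subtrees of maximum degree at most d; moreover, there exist infinitely many caterpillars of maximum degree at most Δ for which every covering by degree-d subtrees requires at least ⌈(Δ−2)/(d−2)⌉ subtrees. -/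
/-- A subgraph is a *degree-`d` subtree* if it is connected and every vertex has at
most `d` neighbours in it. -/
def IsDegSubtree {V : Type*} {G : SimpleGraph V} (H : G.Subgraph) (d : ℕ) : Prop :=
  H.Connected ∧ ∀ v : V, (H.neighborSet v).ncard ≤ d

/-- A *caterpillar*: a tree such that deleting all its leaves yields a path, i.e. the
set of non-leaf vertices induces a (possibly empty) connected graph of maximum
degree at most 2. -/
def IsCaterpillar {V : Type*} (G : SimpleGraph V) : Prop :=
  G.IsTree ∧
    (∀ v : V, (G.neighborSet v).ncard ≠ 1 →
      {w : V | (G.neighborSet w).ncard ≠ 1 ∧ G.Adj v w}.ncard ≤ 2) ∧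
    (∀ a b : V, (G.neighborSet a).ncard ≠ 1 → (G.neighborSet b).ncard ≠ 1 →
      Relation.ReflTransGen
        (fun x y => (G.neighborSet x).ncard ≠ 1 ∧ (G.neighborSet y).ncard ≠ 1 ∧
          G.Adj x y) a b)

/-!
Upper bound: with `k = ⌈(Δ - 2)/(d - 2)⌉`, colour the leaves hanging at each spine vertex with
`k` colours so that every colour is used at most `⌈L/k⌉` times among its `L` leaves. The spine
together with the leaves of one colour is a subtree; a spine vertex with `s ≤ 2` spine neighbours
has `L ≤ Δ - s` leaves, hence degree at most `s + ⌈(Δ - s)/k⌉ ≤ d` in it, and the `k` subtrees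
cover every edge.

Lower bound: take a spine of `n` vertices, each carrying `Δ - 2` leaves. A subtree containing two
spine vertices contains the spine path between them, so it has at most `d - 2` leaf edges at any
spine vertex strictly between its leftmost and rightmost spine vertices. If `n > 2k`, some spine
vertex is an end of none of the `k` subtrees, and covering its `Δ - 2` leaf edges forces
`Δ - 2 ≤ k (d - 2)`.
-/

lemma ncard_setOf_lt_mod_eq_le {k : ℕ} (hk : 0 < k) (n i : ℕ) :
    {j | j < n ∧ j % k = i}.ncard ≤ n ⌈/⌉ k := by
  calc {j | j < n ∧ j % k = i}.ncard ≤ (Set.Iio (n ⌈/⌉ k)).ncard := by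
        refine Set.ncard_le_ncard_of_injOn (· / k) ?_ ?_ (Set.finite_Iio _)
        · rintro j ⟨hjn, -⟩
          by_contra! h
          rw [Set.mem_Iio, not_lt, ceilDiv_le_iff_le_mul hk] at h
          have := Nat.mul_div_le j k
          omega
        · rintro a ⟨-, ha⟩ b ⟨-, hb⟩ (hab : a / k = b / k)
          rw [← Nat.div_add_mod a k, ← Nat.div_add_mod b k, hab, ha, hb]
    _ = n ⌈/⌉ k := Set.ncard_Iio_nat _

lemma exists_coloring_ncard_le (β : Type*) [Finite β] {k : ℕ} (hk : 0 < k) :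
    ∃ c : β → Fin k, ∀ i, {x | c x = i}.ncard ≤ Nat.card β ⌈/⌉ k := by
  let e := Finite.equivFin β
  refine ⟨fun x => ⟨e x % k, Nat.mod_lt _ hk⟩, fun i => ?_⟩
  refine le_trans ?_ (ncard_setOf_lt_mod_eq_le hk (Nat.card β) i)
  refine Set.ncard_le_ncard_of_injOn (fun x => (e x : ℕ)) ?_ ?_
    ((Set.finite_lt_nat _).subset fun j hj => hj.1)
  · rintro x rfl
    exact ⟨(e x).isLt, rfl⟩
  · intro x _ y _ hxy
    exact e.injective (Fin.ext hxy)

lemma exists_coloring_ncard_fiber_le {α β : Type*} [Finite α] (p : α → β) {k : ℕ}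
    (hk : 0 < k) :
    ∃ c : α → Fin k, ∀ b i, {x | p x = b ∧ c x = i}.ncard ≤ {x | p x = b}.ncard ⌈/⌉ k := by
  choose c hc using fun b => exists_coloring_ncard_le {x // p x = b} hk
  refine ⟨fun x => c (p x) ⟨x, rfl⟩, fun b i => ?_⟩
  calc {x | p x = b ∧ c (p x) ⟨x, rfl⟩ = i}.ncard
      ≤ (Subtype.val '' {y : {x // p x = b} | c b y = i}).ncard := by
        refine Set.ncard_le_ncard ?_ (Set.toFinite _)
        rintro x ⟨rfl, hx⟩
        exact ⟨⟨x, rfl⟩, hx, rfl⟩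
    _ ≤ {y : {x // p x = b} | c b y = i}.ncard := Set.ncard_image_le (Set.toFinite _)
    _ ≤ {x | p x = b}.ncard ⌈/⌉ k := hc b i

lemma exists_coloring_ncard_rel_le {α β : Type*} [Finite α] (R : α → β → Prop)
    (hR : ∀ x b b', R x b → R x b' → b = b') {k : ℕ} (hk : 0 < k) :
    ∃ c : α → Fin k, ∀ b i, {x | R x b ∧ c x = i}.ncard ≤ {x | R x b}.ncard ⌈/⌉ k := by
  classical
  let p : α → Option β := fun x => if h : ∃ b, R x b then some h.choose else none
  have hp : ∀ x b, R x b ↔ p x = some b := by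
    intro x b
    by_cases h : ∃ b, R x b
    · simp only [p, dif_pos h, Option.some.injEq]
      exact ⟨hR _ _ _ h.choose_spec, fun hb => hb ▸ h.choose_spec⟩
    · simp only [p, dif_neg h, reduceCtorEq, iff_false]
      exact fun hb => h ⟨b, hb⟩
  obtain ⟨c, hc⟩ := exists_coloring_ncard_fiber_le p hk
  refine ⟨c, fun b i => ?_⟩
  simpa only [hp] using hc (some b) i

lemma add_ceilDiv_le {s L Δ d k : ℕ} (hs : s ≤ 2) (hL : s + L ≤ Δ) (hd : 2 ≤ d) (hk : 0 < k)
    (hkd : Δ - 2 ≤ (d - 2) * k) : s + L ⌈/⌉ k ≤ d := by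
  have hsplit : k * (d - s) = (d - 2) * k + (2 - s) * k := by
    rw [← Nat.add_mul, mul_comm]
    congr 1
    omega
  have : 2 - s ≤ (2 - s) * k := Nat.le_mul_of_pos_right _ hk
  have : L ⌈/⌉ k ≤ d - s := (ceilDiv_le_iff_le_mul hk).mpr (by omega)
  omega

lemma Finset.exists_forall_mem_exists_lt_and_exists_gt {ι α : Type*} [Fintype ι] [Fintype α]
    [LinearOrder α] (A : ι → Finset α) (h : 2 * Fintype.card ι < Fintype.card α) :
    ∃ j, ∀ i, j ∈ A i → (∃ a ∈ A i, a < j) ∧ ∃ b ∈ A i, j < b := by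
  classical
  let ends (i : ι) : Finset α :=
    if hA : (A i).Nonempty then {(A i).min' hA, (A i).max' hA} else ∅
  have hends : (Finset.univ.biUnion ends).card < (Finset.univ : Finset α).card := by
    refine Finset.card_biUnion_le.trans_lt (lt_of_le_of_lt ?_ h)
    refine (Finset.sum_le_sum fun i _ => (?_ : (ends i).card ≤ 2)).trans (by simp [mul_comm])
    by_cases hA : (A i).Nonempty
    · simpa [ends, hA] using Finset.card_le_two
    · simp [ends, hA]
  obtain ⟨j, -, hj⟩ := Finset.exists_mem_notMem_of_card_lt_card hends
  refine ⟨j, fun i hji => ?_⟩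
  have hA : (A i).Nonempty := ⟨j, hji⟩
  have hji' : j ∉ ends i := fun h => hj (Finset.mem_biUnion.mpr ⟨i, Finset.mem_univ i, h⟩)
  simp only [ends, dif_pos hA, Finset.mem_insert, Finset.mem_singleton, not_or] at hji'
  obtain ⟨hmin, hmax⟩ := hji'
  exact ⟨⟨_, (A i).min'_mem hA, lt_of_le_of_ne ((A i).min'_le j hji) (Ne.symm hmin)⟩,
    ⟨_, (A i).max'_mem hA, lt_of_le_of_ne ((A i).le_max' j hji) hmax⟩⟩

namespace SimpleGraph

variable {V : Type*} {G : SimpleGraph V}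

lemma Connected.mem_of_forall_adj_mem (hG : G.Connected) {S : Set V}
    (hS : ∀ x y, x ∈ S → G.Adj x y → y ∈ S) {x : V} (hx : x ∈ S) (z : V) : z ∈ S := by
  by_contra hz
  obtain ⟨p⟩ := hG.preconnected x z
  obtain ⟨d, -, hd₁, hd₂⟩ := p.exists_boundary_dart S hx hz
  exact hd₂ (hS _ _ hd₁ d.adj)

lemma Walk.mem_edges_of_forall_adj_mem_not_mem {S : Set V} {a b u v : V}
    (hS : ∀ x y, G.Adj x y → x ∈ S → y ∉ S → x = a ∧ y = b)
    (p : G.Walk u v) (hu : u ∈ S) (hv : v ∉ S) : s(a, b) ∈ p.edges := by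
  obtain ⟨d, hd, hd₁, hd₂⟩ := p.exists_boundary_dart S hu hv
  obtain ⟨ha, hb⟩ := hS _ _ d.adj hd₁ hd₂
  rw [p.edges_eq_map_darts, ← ha, ← hb]
  exact List.mem_map_of_mem hd

lemma neighborSet_eq_singleton_of_ncard_eq_one {x y : V} (hx : (G.neighborSet x).ncard = 1)
    (hxy : G.Adj x y) : G.neighborSet x = {y} := by
  obtain ⟨a, ha⟩ := Set.ncard_eq_one.mp hx
  have hy : y ∈ G.neighborSet x := hxy
  rw [ha, Set.mem_singleton_iff] at hy
  rw [ha, hy]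

lemma Connected.ncard_neighborSet_ne_one_of_adj (hG : G.Connected) {w x y : V}
    (hw : (G.neighborSet w).ncard ≠ 1) (hx : (G.neighborSet x).ncard = 1) (hxy : G.Adj x y) :
    (G.neighborSet y).ncard ≠ 1 := by
  intro hy
  have hxy' := neighborSet_eq_singleton_of_ncard_eq_one hx hxy
  have hyx := neighborSet_eq_singleton_of_ncard_eq_one hy hxy.symm
  have hclosed : ∀ u z, u ∈ ({x, y} : Set V) → G.Adj u z → z ∈ ({x, y} : Set V) := by
    rintro u z (rfl | rfl) huz
    · exact Or.inr (hxy'.subset huz)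
    · exact Or.inl (hyx.subset huz)
  rcases hG.mem_of_forall_adj_mem hclosed (Or.inl rfl) w with rfl | rfl
  exacts [hw hx, hw hy]

lemma Subgraph.connected_of_forall_reflTransGen {H : G.Subgraph} {w : V} (hw : w ∈ H.verts)
    (h : ∀ v ∈ H.verts, Relation.ReflTransGen H.Adj v w) : H.Connected := by
  have reach : ∀ v (hv : v ∈ H.verts), H.coe.Reachable ⟨v, hv⟩ ⟨w, hw⟩ := by
    intro v hv
    induction h v hv using Relation.ReflTransGen.head_induction_on with
    | refl => rfl
    | head hab _ ih =>
      exact (show H.coe.Adj ⟨_, _⟩ ⟨_, H.edge_vert hab.symm⟩ from hab).reachable.trans (ih _)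
  refine Subgraph.connected_iff.mpr ⟨Subgraph.preconnected_iff.mpr ?_, ⟨w, hw⟩⟩
  rintro ⟨a, ha⟩ ⟨b, hb⟩
  exact (reach a ha).trans (reach b hb).symm

lemma Connected.isDegSubtree_top (hG : G.Connected)
    {d : ℕ} (hd : ∀ v, (G.neighborSet v).ncard ≤ d) : IsDegSubtree (⊤ : G.Subgraph) d :=
  ⟨Subgraph.connected_of_forall_reflTransGen (w := hG.nonempty.some) trivial
    fun _ _ => (reachable_iff_reflTransGen _ _).mp (hG.preconnected _ _), hd⟩

lemma ncard_neighborSet_induce_union_le [Finite V] (T : Set V) (v : V) :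
    (((⊤ : G.Subgraph).induce ({v | (G.neighborSet v).ncard ≠ 1} ∪ T)).neighborSet v).ncard ≤
      {w | (G.neighborSet w).ncard ≠ 1 ∧ G.Adj v w}.ncard +
        {x | ((G.neighborSet x).ncard = 1 ∧ G.Adj x v) ∧ x ∈ T}.ncard := by
  refine le_trans (Set.ncard_le_ncard ?_ (Set.toFinite _)) (Set.ncard_union_le _ _)
  rintro x ⟨-, hxT, hvx : G.Adj v x⟩
  by_cases hx : (G.neighborSet x).ncard = 1
  · exact Or.inr ⟨⟨hx, hvx.symm⟩, hxT.resolve_left (not_not.mpr hx)⟩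
  · exact Or.inl ⟨hx, hvx⟩

end SimpleGraph

open SimpleGraph

namespace IsCaterpillar

variable {V : Type*} {G : SimpleGraph V}

lemma connected_induce_union (hG : IsCaterpillar G) {w : V} (hw : (G.neighborSet w).ncard ≠ 1)
    (T : Set V) :
    ((⊤ : G.Subgraph).induce ({v | (G.neighborSet v).ncard ≠ 1} ∪ T)).Connected := by
  set H := (⊤ : G.Subgraph).induce ({v | (G.neighborSet v).ncard ≠ 1} ∪ T)
  have along_spine : ∀ v, (G.neighborSet v).ncard ≠ 1 → Relation.ReflTransGen H.Adj v w :=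
    fun v hv => Relation.ReflTransGen.mono (fun _ _ ⟨hx, hy, hxy⟩ => ⟨Or.inl hx, Or.inl hy, hxy⟩)
      _ _ (hG.2.2 v w hv hw)
  refine Subgraph.connected_of_forall_reflTransGen (Or.inl hw) fun v hv => ?_
  by_cases hleaf : (G.neighborSet v).ncard = 1
  · obtain ⟨y, hy⟩ := Set.ncard_eq_one.mp hleaf
    have hvy : y ∈ G.neighborSet v := hy ▸ Set.mem_singleton y
    have hy' := hG.1.connected.ncard_neighborSet_ne_one_of_adj hw hleaf hvy
    exact .head ⟨hv, Or.inl hy', hvy⟩ (along_spine y hy')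
  · exact along_spine v hleaf

theorem exists_isDegSubtree_cover [Finite V] (hG : IsCaterpillar G) {Δ d k : ℕ} (hd : 2 ≤ d)
    (hk : 0 < k) (hkd : Δ - 2 ≤ (d - 2) * k) (hΔ : ∀ v, (G.neighborSet v).ncard ≤ Δ) :
    ∃ F : Fin k → G.Subgraph,
      (∀ i, IsDegSubtree (F i) d) ∧ ∀ e ∈ G.edgeSet, ∃ i, e ∈ (F i).edgeSet := by
  have hconn := hG.1.connected
  by_cases hS : ∀ w, (G.neighborSet w).ncard = 1
  · refine ⟨fun _ => ⊤, fun _ => hconn.isDegSubtree_top fun v => by rw [hS v]; omega, ?_⟩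
    exact fun e he => ⟨⟨0, hk⟩, by simpa using he⟩
  push Not at hS
  obtain ⟨w, hw⟩ := hS
  obtain ⟨c, hc⟩ := exists_coloring_ncard_rel_le
    (fun x v => (G.neighborSet x).ncard = 1 ∧ G.Adj x v)
    (fun x b b' ⟨hx, hb⟩ ⟨_, hb'⟩ =>
      ((neighborSet_eq_singleton_of_ncard_eq_one hx hb).subset hb').symm) hk
  refine ⟨fun i => (⊤ : G.Subgraph).induce ({v | (G.neighborSet v).ncard ≠ 1} ∪ {x | c x = i}),
    fun i => ⟨hG.connected_induce_union hw _, fun v => ?_⟩, ?_⟩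
  · by_cases hv : (G.neighborSet v).ncard = 1
    · refine (Set.ncard_le_ncard (Subgraph.neighborSet_subset _ v) (Set.toFinite _)).trans ?_
      omega
    have hdeg : {w | (G.neighborSet w).ncard ≠ 1 ∧ G.Adj v w}.ncard +
        {x | (G.neighborSet x).ncard = 1 ∧ G.Adj x v}.ncard ≤ Δ := by
      rw [← Set.ncard_union_eq (Set.disjoint_left.mpr fun x hx hx' => hx.1 hx'.1)]
      convert hΔ v using 2
      ext x
      simp only [Set.mem_union, Set.mem_ofPred_eq, mem_neighborSet, G.adj_comm x v]
      tauto
    exact (ncard_neighborSet_induce_union_le _ v).trans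
      (add_ceilDiv_le (hG.2.1 v hv) hdeg hd hk hkd |>.trans' (by gcongr; exact hc v i))
  · refine Sym2.ind fun x y (hxy : G.Adj x y) => ?_
    by_cases hx : (G.neighborSet x).ncard = 1
    · exact ⟨c x, Or.inr rfl, Or.inl (hconn.ncard_neighborSet_ne_one_of_adj hw hx hxy), hxy⟩
    by_cases hy : (G.neighborSet y).ncard = 1
    · exact ⟨c y, Or.inl hx, Or.inr rfl, hxy⟩
    · exact ⟨⟨0, hk⟩, Or.inl hx, Or.inl hy, hxy⟩

end IsCaterpillar

/-- The caterpillar whose spine is the path `(0, none), …, (n - 1, none)` and in which every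
spine vertex `(j, none)` carries the `l` leaves `(j, some t)`. -/
def caterpillarGraph (n l : ℕ) : SimpleGraph (Fin n × Option (Fin l)) :=
  SimpleGraph.fromRel fun x y =>
    (x.1 = y.1 ∧ x.2 = none ∧ y.2 ≠ none) ∨ (x.2 = none ∧ y.2 = none ∧ x.1.val + 1 = y.1.val)

namespace caterpillarGraph

variable {n l : ℕ}

lemma adj_some_iff {j : Fin n} {t : Fin l} {y : Fin n × Option (Fin l)} :
    (caterpillarGraph n l).Adj (j, some t) y ↔ y = (j, none) := by
  obtain ⟨j', _ | t'⟩ := y <;> simp [caterpillarGraph, eq_comm]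

lemma adj_none_iff {j : Fin n} {y : Fin n × Option (Fin l)} :
    (caterpillarGraph n l).Adj (j, none) y ↔
      (y.1 = j ∧ y.2 ≠ none) ∨ (y.2 = none ∧ (j.val + 1 = y.1.val ∨ y.1.val + 1 = j.val)) := by
  obtain ⟨j', _ | t'⟩ := y
  · simp [caterpillarGraph, Fin.ext_iff]
    omega
  · simp [caterpillarGraph, eq_comm]

lemma neighborSet_some (j : Fin n) (t : Fin l) :
    (caterpillarGraph n l).neighborSet (j, some t) = {(j, none)} := by
  ext y
  exact adj_some_iff

lemma adj_none_none {j j' : Fin n} (h : j.val + 1 = j'.val) :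
    (caterpillarGraph n l).Adj (j, none) (j', none) :=
  adj_none_iff.mpr (Or.inr ⟨rfl, Or.inl h⟩)

lemma adj_none_some (j : Fin n) (t : Fin l) :
    (caterpillarGraph n l).Adj (j, none) (j, some t) :=
  adj_none_iff.mpr (Or.inl ⟨rfl, by simp⟩)

lemma reflTransGen_none {R : Fin n × Option (Fin l) → Fin n × Option (Fin l) → Prop}
    (hR : ∀ j j' : Fin n, j.val + 1 = j'.val → R (j, none) (j', none) ∧ R (j', none) (j, none))
    (a b : Fin n) : Relation.ReflTransGen R (a, none) (b, none) := by
  suffices h : ∀ m (a b : Fin n), a.val + m = b.val →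
      Relation.ReflTransGen R (a, none) (b, none) ∧ Relation.ReflTransGen R (b, none) (a, none) by
    rcases le_total a b with hab | hab
    · exact (h _ a b (Nat.add_sub_cancel' hab)).1
    · exact (h _ b a (Nat.add_sub_cancel' hab)).2
  intro m
  induction m with
  | zero =>
    intro a b h
    obtain rfl : a = b := Fin.ext h
    exact ⟨.refl, .refl⟩
  | succ m ih =>
    intro a b h
    let c : Fin n := ⟨a.val + m, by omega⟩
    obtain ⟨h₁, h₂⟩ := ih a c rfl
    obtain ⟨h₃, h₄⟩ := hR c b (by simp only [c]; omega)
    exact ⟨h₁.tail h₃, h₂.head h₄⟩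

lemma mem_edges_of_fst_le_of_lt_fst {j j' : Fin n} (hj : j.val + 1 = j'.val)
    {u v : Fin n × Option (Fin l)} (p : (caterpillarGraph n l).Walk u v) (hu : u.1 ≤ j)
    (hv : j < v.1) : s((j, none), (j', none)) ∈ p.edges := by
  refine p.mem_edges_of_forall_adj_mem_not_mem (S := {x : Fin n × Option (Fin l) | x.1 ≤ j}) ?_
    hu (not_le.mpr hv)
  rintro ⟨x, _ | t⟩ y hxy (hx : x ≤ j) hy
  · rw [Set.mem_ofPred_eq, not_le] at hy
    rcases adj_none_iff.mp hxy with ⟨h, -⟩ | ⟨hy2, h | h⟩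
    · exact absurd (h ▸ hx) (not_le.mpr hy)
    · rw [Fin.le_def] at hx
      rw [Fin.lt_def] at hy
      exact ⟨Prod.ext (Fin.ext (by dsimp only; omega)) rfl,
        Prod.ext (Fin.ext (by dsimp only; omega)) hy2⟩
    · rw [Fin.le_def] at hx
      rw [Fin.lt_def] at hy
      omega
  · rw [adj_some_iff.mp hxy] at hy
    exact absurd hx hy

lemma isAcyclic : (caterpillarGraph n l).IsAcyclic := by
  have key : ∀ {v w : Fin n × Option (Fin l)}, (v.1 = w.1 ∧ v.2 = none ∧ w.2 ≠ none) ∨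
      (v.2 = none ∧ w.2 = none ∧ v.1.val + 1 = w.1.val) →
      (caterpillarGraph n l).IsBridge s(v, w) := by
    rintro ⟨j, v⟩ ⟨j', w⟩ (⟨rfl, rfl, hw⟩ | ⟨rfl, rfl, h⟩) <;>
      rw [isBridge_iff_forall_walk_mem_edges] <;> intro p
    · obtain ⟨t, rfl⟩ := Option.ne_none_iff_exists'.mp hw
      refine p.mem_edges_of_forall_adj_mem_not_mem (S := {x | x ≠ (j, some t)}) ?_
        (by simp) (by simp)
      rintro x y hxy - hy
      rw [Set.mem_ofPred_eq, not_not] at hy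
      subst hy
      exact ⟨adj_some_iff.mp hxy.symm, rfl⟩
    · exact mem_edges_of_fst_le_of_lt_fst h p le_rfl (by rw [Fin.lt_def]; omega)
  rw [isAcyclic_iff_forall_adj_isBridge]
  intro v w hvw
  rcases ((fromRel_adj _ _ _).mp hvw).2 with h | h
  · exact key h
  · rw [Sym2.eq_swap]
    exact key h

lemma connected (hn : 0 < n) : (caterpillarGraph n l).Connected := by
  have hspine := reflTransGen_none (R := (caterpillarGraph n l).Adj)
    fun j j' h => ⟨adj_none_none h, (adj_none_none h).symm⟩
  refine (connected_iff_exists_forall_reachable _).mpr ⟨(⟨0, hn⟩, none), ?_⟩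
  rintro ⟨j, _ | t⟩
  · exact (reachable_iff_reflTransGen _ _).mpr (hspine _ j)
  · exact ((reachable_iff_reflTransGen _ _).mpr (hspine _ j)).trans (adj_none_some j t).reachable

lemma ncard_neighborSet_ne_one_iff (hn : 2 ≤ n) (hl : 0 < l) {x : Fin n × Option (Fin l)} :
    ((caterpillarGraph n l).neighborSet x).ncard ≠ 1 ↔ x.2 = none := by
  obtain ⟨j, _ | t⟩ := x
  · simp only [iff_true]
    refine ((Set.one_lt_ncard_iff (Set.toFinite _)).mpr ?_).ne'
    obtain ⟨j', hj'⟩ : ∃ j' : Fin n, j.val + 1 = j'.val ∨ j'.val + 1 = j.val :=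
      if h : j.val + 1 < n then ⟨⟨j + 1, h⟩, Or.inl rfl⟩
      else ⟨⟨j - 1, by omega⟩, Or.inr (by simp only; omega)⟩
    exact ⟨(j, some ⟨0, hl⟩), (j', none), adj_none_some _ _,
      adj_none_iff.mpr (Or.inr ⟨rfl, hj'⟩), by simp⟩
  · simp [neighborSet_some]

lemma ncard_none_neighbors_le (j : Fin n) :
    {y | y.2 = none ∧ (caterpillarGraph n l).Adj (j, none) y}.ncard ≤ 2 := by
  refine (Set.ncard_le_ncard_of_injOn (fun y => y.1.val) ?_ ?_ (Set.toFinite _)).trans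
    (Set.ncard_insert_le (j.val + 1) {j.val - 1} |>.trans (by simp))
  · rintro y ⟨hy, hjy⟩
    rcases adj_none_iff.mp hjy with ⟨-, h⟩ | ⟨-, h | h⟩
    · exact absurd hy h
    · exact Or.inl h.symm
    · exact Or.inr (by simp only [Set.mem_singleton_iff]; omega)
  · rintro y ⟨hy, -⟩ y' ⟨hy', -⟩ h
    exact Prod.ext (Fin.ext h) (hy.trans hy'.symm)

lemma ncard_neighborSet_le (x : Fin n × Option (Fin l)) :
    ((caterpillarGraph n l).neighborSet x).ncard ≤ l + 2 := by
  obtain ⟨j, _ | t⟩ := x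
  · calc _ ≤ ({y | y.2 = none ∧ (caterpillarGraph n l).Adj (j, none) y} ∪
          Set.range fun t => (j, some t)).ncard := by
          refine Set.ncard_le_ncard (fun y hy => ?_) (Set.toFinite _)
          obtain ⟨j', _ | t⟩ := y
          · exact Or.inl ⟨rfl, hy⟩
          · obtain ⟨rfl, -⟩ := Prod.mk.inj (adj_some_iff.mp hy.symm)
            exact Or.inr ⟨t, rfl⟩
      _ ≤ 2 + l := by
          refine (Set.ncard_union_le _ _).trans (add_le_add (ncard_none_neighbors_le j) ?_)
          rw [Set.ncard_range_of_injective fun a b h => by simpa using h, Nat.card_fin]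
      _ = l + 2 := add_comm _ _
  · simp [neighborSet_some]

theorem isCaterpillar (hn : 2 ≤ n) (hl : 0 < l) : IsCaterpillar (caterpillarGraph n l) := by
  refine ⟨⟨connected (by omega), isAcyclic⟩, ?_, ?_⟩
  · rintro ⟨j, v⟩ hv
    obtain rfl : v = none := (ncard_neighborSet_ne_one_iff hn hl).mp hv
    simpa only [ncard_neighborSet_ne_one_iff hn hl] using ncard_none_neighbors_le j
  · rintro ⟨a, u⟩ ⟨b, v⟩ hu hv
    simp only [ncard_neighborSet_ne_one_iff hn hl] at hu hv ⊢
    subst hu hv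
    exact reflTransGen_none (fun j j' h =>
      ⟨⟨rfl, rfl, adj_none_none h⟩, ⟨rfl, rfl, (adj_none_none h).symm⟩⟩) a b

lemma adj_none_of_connected {F : (caterpillarGraph n l).Subgraph} (hF : F.Connected)
    {a b j j' : Fin n} (ha : (a, none) ∈ F.verts) (hb : (b, none) ∈ F.verts) (haj : a ≤ j)
    (hjb : j < b) (hj : j.val + 1 = j'.val) : F.Adj (j, none) (j', none) := by
  obtain ⟨p, hp⟩ := (F.connected_iff_forall_exists_walk_subgraph.mp hF).2 ha hb
  exact hp.2 (Walk.adj_toSubgraph_iff_mem_edges.mpr (mem_edges_of_fst_le_of_lt_fst hj p haj hjb))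

lemma ncard_adj_some_add_two_le {F : (caterpillarGraph n l).Subgraph} {j j₁ j₂ : Fin n}
    (h : j₁ ≠ j₂) (h₁ : F.Adj (j, none) (j₁, none)) (h₂ : F.Adj (j, none) (j₂, none)) :
    {t | F.Adj (j, none) (j, some t)}.ncard + 2 ≤ (F.neighborSet (j, none)).ncard := by
  have hdisj : Disjoint ((fun t => (j, some t)) '' {t | F.Adj (j, none) (j, some t)})
      {(j₁, none), (j₂, none)} := by
    simp [Set.disjoint_left]
  have hcard := Set.ncard_union_eq hdisj
  rw [Set.ncard_image_of_injective _ fun a b h => by simpa using h,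
    Set.ncard_pair (by simpa using h)] at hcard
  rw [← hcard]
  refine Set.ncard_le_ncard ?_ (Set.toFinite _)
  rintro y (⟨t, ht, rfl⟩ | rfl | rfl)
  exacts [ht, h₁, h₂]

theorem le_mul_of_cover {d k : ℕ} (hk : 2 * k < n) (F : Fin k → (caterpillarGraph n l).Subgraph)
    (hF : ∀ i, IsDegSubtree (F i) d)
    (hcov : ∀ e ∈ (caterpillarGraph n l).edgeSet, ∃ i, e ∈ (F i).edgeSet) :
    l ≤ (d - 2) * k := by
  classical
  obtain ⟨j, hj⟩ := Finset.exists_forall_mem_exists_lt_and_exists_gt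
    (fun i => Finset.univ.filter fun j => (j, none) ∈ (F i).verts) (by simpa using hk)
  have hleaves : ∀ i, {t | (F i).Adj (j, none) (j, some t)}.ncard ≤ d - 2 := by
    intro i
    rcases Set.eq_empty_or_nonempty {t | (F i).Adj (j, none) (j, some t)} with h | ⟨t, ht⟩
    · simp [h]
    obtain ⟨⟨a, ha, haj⟩, b, hb, hjb⟩ := hj i (by simpa using ht.fst_mem)
    simp only [Finset.mem_filter, Finset.mem_univ, true_and] at ha hb
    rw [Fin.lt_def] at haj hjb
    have h₁ := adj_none_of_connected (hF i).1 ha hb (j := ⟨j.val - 1, by omega⟩) (j' := j)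
      (by rw [Fin.le_def]; dsimp only; omega) (by rw [Fin.lt_def]; dsimp only; omega)
      (by dsimp only; omega)
    have h₂ := adj_none_of_connected (hF i).1 ha hb (j' := ⟨j.val + 1, by omega⟩)
      (by rw [Fin.le_def]; omega) (by rw [Fin.lt_def]; omega) rfl
    have := ncard_adj_some_add_two_le (by simp [Fin.ext_iff]) h₁.symm h₂
    have := (hF i).2 (j, none)
    omega
  calc l = (Set.univ : Set (Fin l)).ncard := by simp
    _ ≤ (⋃ i, {t | (F i).Adj (j, none) (j, some t)}).ncard := by
        refine Set.ncard_le_ncard (fun t _ => ?_) (Set.toFinite _)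
        obtain ⟨i, hi⟩ := hcov s((j, none), (j, some t)) (adj_none_some j t)
        exact Set.mem_iUnion.mpr ⟨i, hi⟩
    _ ≤ ∑ i, {t | (F i).Adj (j, none) (j, some t)}.ncard := Set.ncard_iUnion_le_of_fintype _
    _ ≤ ∑ _i : Fin k, (d - 2) := Finset.sum_le_sum fun i _ => hleaves i
    _ = (d - 2) * k := by simp [mul_comm]

end caterpillarGraph

/-- For all integers `Δ ≥ d ≥ 3`, every caterpillar of maximum
degree at most `Δ` has a covering by `⌈(Δ−2)/(d−2)⌉` degree-`d` subtrees; moreover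
there are infinitely many caterpillars of maximum degree at most `Δ` for which every
covering by degree-`d` subtrees needs at least `⌈(Δ−2)/(d−2)⌉` subtrees. -/
theorem caterpillar_cover (Δ d : ℕ) (hd : 3 ≤ d) (hΔ : d ≤ Δ) :
    (∀ (V : Type) [Fintype V] (G : SimpleGraph V), IsCaterpillar G →
      (∀ v : V, (G.neighborSet v).ncard ≤ Δ) →
      ∃ F : Fin ((Δ - 2 + (d - 2) - 1) / (d - 2)) → G.Subgraph,
        (∀ i, IsDegSubtree (F i) d) ∧
        (∀ e ∈ G.edgeSet, ∃ i, e ∈ (F i).edgeSet)) ∧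
    (∀ N : ℕ, ∃ (V : Type) (_ : Fintype V) (G : SimpleGraph V),
      N ≤ Fintype.card V ∧ IsCaterpillar G ∧
      (∀ v : V, (G.neighborSet v).ncard ≤ Δ) ∧
      ∀ (k : ℕ) (F : Fin k → G.Subgraph),
        (∀ i, IsDegSubtree (F i) d) →
        (∀ e ∈ G.edgeSet, ∃ i, e ∈ (F i).edgeSet) →
        (Δ - 2 + (d - 2) - 1) / (d - 2) ≤ k) := by
  simp only [← Nat.ceilDiv_eq_add_pred_div]
  set K := (Δ - 2) ⌈/⌉ (d - 2)
  have hd₂ : 0 < d - 2 := by omega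
  have hK : Δ - 2 ≤ (d - 2) * K := le_smul_ceilDiv hd₂
  have hK₀ : 0 < K := Nat.pos_of_ne_zero fun h => by rw [h] at hK; omega
  refine ⟨fun V _ G hG hdeg => hG.exists_isDegSubtree_cover (by omega) hK₀ hK hdeg, fun N => ?_⟩
  let n := N + 2 * K + 2
  refine ⟨_, inferInstance, caterpillarGraph n (Δ - 2), ?_,
    caterpillarGraph.isCaterpillar (by omega) (by omega),
    fun v => (caterpillarGraph.ncard_neighborSet_le v).trans (by omega), fun k F hF hcov => ?_⟩
  · simp only [Fintype.card_prod, Fintype.card_fin, Fintype.card_option]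
    exact (by omega : N ≤ n).trans (Nat.le_mul_of_pos_right _ (by omega))
  · by_cases hk : 2 * k < n
    · exact (ceilDiv_le_iff_le_mul hd₂).mpr (caterpillarGraph.le_mul_of_cover hk F hF hcov)
    · omega
end

section
/- Let T be a tree in which every non-leaf vertex has degree at least 4, and suppose E(T) can be covered by c connected subtrees each of maximum degree at most 3. Then the pathwidth of T is at most c. -/
/-- `PwLE G k S`: the subgraph of `G` induced on the vertex set `S` (a forest) has
pathwidth at most `k`, following the recursive definition: pathwidth `0` means no
edges (every component is a single vertex), and pathwidth at most `k+1` means one can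
delete, from each component, the vertex set of a path so that the rest has pathwidth
at most `k`.  Here `P` is a set inducing paths, with at most one path per component of
the induced graph on `S`. -/
def PwLE {V : Type*} (G : SimpleGraph V) : ℕ → Set V → Prop
  | 0, S => ∀ a ∈ S, ∀ b ∈ S, ¬ G.Adj a b
  | k + 1, S => ∃ P : Set V, P ⊆ S ∧
      (∀ v ∈ P, {w ∈ P | G.Adj v w}.ncard ≤ 2) ∧
      (∀ a ∈ P, ∀ b ∈ P,
        Relation.ReflTransGen (fun x y => x ∈ S ∧ y ∈ S ∧ G.Adj x y) a b →
        Relation.ReflTransGen (fun x y => x ∈ P ∧ y ∈ P ∧ G.Adj x y) a b) ∧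
      PwLE G k (S \ P)

/-!
Call an edge `zy` of a component `K` crowded when every cover subtree meeting `K` also meets
the branch of `K` behind `y`. No vertex has three crowded edges: every subtree meeting `K`
would contain all three, and the subtree covering a fourth edge at that vertex (non-leaves
have degree at least 4) would have degree 4 there. Hence `K` contains a path from which no
crowded edge hangs: a vertex without crowded edges, or else a longest path of edges crowded
in both directions. Deleting such a path from every component, each new component hangs from
a non-crowded edge and so meets fewer subtrees than its old component; induction on the
number of subtrees meeting a component bounds the pathwidth.
-/

namespace SimpleGraph

variable {V ι : Type*} {G : SimpleGraph V}

def restrict (G : SimpleGraph V) (S : Set V) : SimpleGraph V where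
  Adj x y := x ∈ S ∧ y ∈ S ∧ G.Adj x y
  symm := ⟨fun _ _ h ↦ ⟨h.2.1, h.1, h.2.2.symm⟩⟩
  loopless := ⟨fun _ h ↦ h.2.2.ne rfl⟩

@[simp]
lemma restrict_adj {S : Set V} {x y : V} :
    (G.restrict S).Adj x y ↔ x ∈ S ∧ y ∈ S ∧ G.Adj x y := Iff.rfl

lemma restrict_mono {S S' : Set V} (h : S ⊆ S') : G.restrict S ≤ G.restrict S' :=
  fun _ _ ⟨hx, hy, hxy⟩ ↦ ⟨h hx, h hy, hxy⟩

lemma Reachable.mem_of_restrict {S : Set V} {a v : V} (h : (G.restrict S).Reachable a v)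
    (ha : a ∈ S) : v ∈ S := by
  obtain ⟨q⟩ := h.symm
  cases q with
  | nil => exact ha
  | cons h _ => exact (restrict_adj.mp h).1

lemma Walk.reachable_restrict {S : Set V} {u v : V} (q : G.Walk u v)
    (hq : ∀ x ∈ q.support, x ∈ S) : (G.restrict S).Reachable u v := by
  induction q with
  | nil => rfl
  | cons h q ih =>
    simp only [Walk.support_cons, List.mem_cons, forall_eq_or_imp] at hq
    exact (Adj.reachable (G := G.restrict S) ⟨hq.1, hq.2 _ q.start_mem_support, h⟩).trans
      (ih hq.2)

lemma Walk.reachable_restrict_support {a b u v : V} (p : G.Walk a b) (hu : u ∈ p.support)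
    (hv : v ∈ p.support) : (G.restrict {x | x ∈ p.support}).Reachable u v := by
  classical
  have h (w : V) (hw : w ∈ p.support) : (G.restrict {x | x ∈ p.support}).Reachable a w :=
    (p.takeUntil w hw).reachable_restrict fun _ hx ↦ p.support_takeUntil_subset_support hw hx
  exact (h u hu).symm.trans (h v hv)

lemma IsAcyclic.ncard_adj_mem_support_le_two (hG : G.IsAcyclic) {a b v : V} {p : G.Walk a b}
    (hp : p.IsPath) (hv : v ∈ p.support) : {w | w ∈ p.support ∧ G.Adj v w}.ncard ≤ 2 := by
  classical
  refine (Set.ncard_le_ncard (t := {(p.takeUntil v hv).reverse.snd, (p.dropUntil v hv).snd})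
    ?_).trans ((Set.ncard_insert_le _ _).trans (by simp))
  rintro w ⟨hw, hvw⟩
  rw [← p.take_spec hv, Walk.mem_support_append_iff] at hw
  rcases hw with hw | hw
  · exact .inl (hG.eq_snd_of_adj_start (hp.takeUntil hv).reverse hvw (by simpa using hw))
  · exact .inr (hG.eq_snd_of_adj_start (hp.dropUntil hv) hvw hw)

def branch (G : SimpleGraph V) (z y : V) : Set V :=
  {v | (G.deleteEdges {s(z, y)}).Reachable y v}

section Branch

variable {x y z w v : V}

lemma mem_branch_self : y ∈ G.branch z y := Reachable.refl y

lemma notMem_branch (hG : G.IsAcyclic) (h : G.Adj z y) : z ∉ G.branch z y :=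
  fun hz ↦ isBridge_iff.mp (isAcyclic_iff_forall_adj_isBridge.mp hG h) hz.symm

lemma mem_branch_of_reachable_restrict {S : Set V} (hz : z ∉ S)
    (h : (G.restrict S).Reachable y v) : v ∈ G.branch z y :=
  h.mono fun a b hab ↦ by
    obtain ⟨ha, hb, hab⟩ := hab
    refine deleteEdges_adj.mpr ⟨hab, fun he ↦ hz ?_⟩
    rcases Sym2.eq_iff.mp he with ⟨rfl, -⟩ | ⟨-, rfl⟩ <;> assumption

lemma eq_of_mem_branch_of_notMem (hw : w ∈ G.branch z y) (hv : v ∉ G.branch z y)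
    (h : G.Adj w v) : s(w, v) = s(z, y) := by
  by_contra hne
  exact hv (Reachable.trans hw (deleteEdges_adj.mpr ⟨h, hne⟩).reachable)

/-- A walk from `w` inside the branch cannot come back to `x` without a cycle. -/
lemma reachable_restrict_compl_of_mem_branch (hG : G.IsAcyclic) (h : G.Adj x w)
    (hv : v ∈ G.branch x w) : (G.restrict {x}ᶜ).Reachable w v := by
  classical
  obtain ⟨q⟩ := hv
  refine (q.mapLe (deleteEdges_le _)).reachable_restrict fun u hu hux ↦ ?_
  rw [Walk.support_mapLe_eq_support] at hu
  subst hux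
  exact notMem_branch hG h ⟨q.takeUntil u hu⟩

lemma branch_subset_branch (hG : G.IsAcyclic) (hxw : G.Adj x w) (hyx : G.Adj y x)
    (hwy : w ≠ y) : G.branch x w ⊆ G.branch y x := by
  intro v hv
  have hxw' : (G.deleteEdges {s(y, x)}).Adj x w :=
    deleteEdges_adj.mpr ⟨hxw, by simp [hwy, hyx.ne.symm]⟩
  refine hxw'.reachable.trans ?_
  refine (reachable_restrict_compl_of_mem_branch hG hxw hv).mono fun a b hab ↦ ?_
  obtain ⟨ha, hb, hab⟩ := hab
  exact deleteEdges_adj.mpr ⟨hab, by simp_all⟩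

lemma disjoint_branch_swap (hG : G.IsAcyclic) (h : G.Adj z y) :
    Disjoint (G.branch z y) (G.branch y z) := by
  refine Set.disjoint_left.mpr fun v hzy hyz ↦ notMem_branch hG h ?_
  rw [branch, Set.mem_ofPred_eq, Sym2.eq_swap] at hyz
  exact hzy.trans hyz.symm

lemma disjoint_branch (hG : G.IsAcyclic) (h₁ : G.Adj z y) (h₂ : G.Adj z w) (hne : y ≠ w) :
    Disjoint (G.branch z y) (G.branch z w) :=
  (disjoint_branch_swap hG h₂).symm.mono_left (branch_subset_branch hG h₁ h₂.symm hne)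

lemma Subgraph.Connected.adj_of_mem_branch {H : G.Subgraph} (hH : H.Connected)
    (hw : w ∈ H.verts) (hv : v ∈ H.verts) (hwb : w ∈ G.branch z y) (hvb : v ∉ G.branch z y) :
    H.Adj z y := by
  obtain ⟨p, hp⟩ := (Subgraph.connected_iff_forall_exists_walk_subgraph H).mp hH |>.2 hw hv
  obtain ⟨d, hd, hd₁, hd₂⟩ := p.exists_boundary_dart _ hwb hvb
  have hdH : H.Adj d.fst d.snd :=
    hp.2 (Walk.adj_toSubgraph_iff_mem_edges.mpr (List.mem_map_of_mem hd))
  rwa [← Subgraph.mem_edgeSet, ← eq_of_mem_branch_of_notMem hd₁ hd₂ d.adj]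

end Branch

section Crowded

variable (F : ι → G.Subgraph)

def meeting (C : Set V) : Set ι := {i | ((F i).support ∩ C).Nonempty}

lemma meeting_mono {C C' : Set V} (h : C ⊆ C') : meeting F C ⊆ meeting F C' :=
  fun _ ⟨v, hv, hvC⟩ ↦ ⟨v, hv, h hvC⟩

structure IsCrowded (K : Set V) (z y : V) : Prop where
  mem_left : z ∈ K
  mem_right : y ∈ K
  adj : G.Adj z y
  meeting_subset : meeting F K ⊆ meeting F (K ∩ G.branch z y)

variable {F} {K : Set V} {x y z y₁ y₂ y₃ : V}

lemma IsCrowded.isCrowded_of_adj (hG : G.IsAcyclic) (h : IsCrowded F K z x) (hy : y ∈ K)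
    (hyz : G.Adj y z) (hyx : y ≠ x) : IsCrowded F K y z :=
  ⟨hy, h.mem_left, hyz, h.meeting_subset.trans
    (meeting_mono F (Set.inter_subset_inter_right K (branch_subset_branch hG h.adj hyz hyx.symm)))⟩

/-- Every member of `F` meeting `K` runs from the branch through `y₁` to the one through `y₂`,
so it uses the edge `zy₁`. -/
lemma IsCrowded.subgraph_adj (hG : G.IsAcyclic) (hF : ∀ i, (F i).Connected)
    (h₁ : IsCrowded F K z y₁) (h₂ : IsCrowded F K z y₂) (hne : y₁ ≠ y₂) {i : ι}
    (hi : i ∈ meeting F K) : (F i).Adj z y₁ := by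
  obtain ⟨u₁, hu₁, -, hb₁⟩ := h₁.meeting_subset hi
  obtain ⟨u₂, hu₂, -, hb₂⟩ := h₂.meeting_subset hi
  exact (hF i).adj_of_mem_branch ((F i).support_subset_verts hu₁)
    ((F i).support_subset_verts hu₂) hb₁
    (Set.disjoint_right.mp (disjoint_branch hG h₁.adj h₂.adj hne) hb₂)

lemma not_isCrowded_three [Finite V] (hG : G.IsAcyclic)
    (hdeg : ∀ v : V, (G.neighborSet v).ncard ≠ 1 → 4 ≤ (G.neighborSet v).ncard)
    (hF : ∀ i, (F i).Connected) (hF3 : ∀ i, ∀ v : V, ((F i).neighborSet v).ncard ≤ 3)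
    (hcov : ∀ e ∈ G.edgeSet, ∃ i, e ∈ (F i).edgeSet)
    (h₁ : IsCrowded F K z y₁) (h₂ : IsCrowded F K z y₂) (h₃ : IsCrowded F K z y₃)
    (h₁₂ : y₁ ≠ y₂) (h₁₃ : y₁ ≠ y₃) (h₂₃ : y₂ ≠ y₃) : False := by
  have hfull (i : ι) (hi : i ∈ meeting F K) : {y₁, y₂, y₃} ⊆ (F i).neighborSet z := by
    rintro w (rfl | rfl | rfl)
    exacts [h₁.subgraph_adj hG hF h₂ h₁₂ hi, h₂.subgraph_adj hG hF h₁ h₁₂.symm hi,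
      h₃.subgraph_adj hG hF h₁ h₁₃.symm hi]
  have hthree : ({y₁, y₂, y₃} : Set V).ncard = 3 :=
    Set.ncard_eq_three.mpr ⟨_, _, _, h₁₂, h₁₃, h₂₃, rfl⟩
  have hlt : ({y₁, y₂, y₃} : Set V).ncard < (G.neighborSet z).ncard := by
    have : ({y₁, y₂, y₃} : Set V).ncard ≤ (G.neighborSet z).ncard := by
      refine Set.ncard_le_ncard ?_
      rintro w (rfl | rfl | rfl)
      exacts [h₁.adj, h₂.adj, h₃.adj]
    have := hdeg z (by omega)
    omega
  obtain ⟨w, hw, hw₃⟩ := Set.exists_mem_notMem_of_ncard_lt_ncard hlt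
  obtain ⟨i, hi⟩ := hcov s(z, w) hw
  have hiK : i ∈ meeting F K := ⟨z, ⟨w, hi⟩, h₁.mem_left⟩
  have := Set.ncard_le_ncard
    (Set.insert_subset (show w ∈ (F i).neighborSet z from hi) (hfull i hiK))
  rw [Set.ncard_insert_of_notMem hw₃, hthree] at this
  have := hF3 i z
  omega

/-- If every vertex of `K` has a crowded edge, one with the smallest branch is crowded both
ways. -/
lemma exists_not_isCrowded_or_isCrowded_swap [Finite V] (hG : G.IsAcyclic) (hK : K.Nonempty) :
    (∃ v ∈ K, ∀ y, ¬ IsCrowded F K v y) ∨ ∃ x y, IsCrowded F K x y ∧ IsCrowded F K y x := by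
  by_contra! h
  obtain ⟨v, hv⟩ := hK
  obtain ⟨y₀, h₀⟩ := h.1 v hv
  obtain ⟨⟨y, x⟩, hyx, hmin⟩ := Set.exists_min_image {q : V × V | IsCrowded F K q.1 q.2}
    (fun q ↦ (K ∩ G.branch q.1 q.2).ncard) (Set.toFinite _) ⟨(v, y₀), h₀⟩
  obtain ⟨w, hxw⟩ := h.1 x hyx.mem_right
  have hwy : w ≠ y := by
    rintro rfl
    exact h.2 w x hyx hxw
  have hsub : K ∩ G.branch x w ⊂ K ∩ G.branch y x :=
    (Set.ssubset_iff_of_subset (Set.inter_subset_inter_right K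
      (branch_subset_branch hG hxw.adj hyx.adj hwy))).mpr
      ⟨x, ⟨hyx.mem_right, mem_branch_self⟩, fun hx ↦ notMem_branch hG hxw.adj hx.2⟩
  exact (Set.ncard_lt_ncard hsub).not_ge (hmin (x, w) hxw)

end Crowded

section Spine

variable (F : ι → G.Subgraph)

def IsCrowdedPath (K : Set V) {a b : V} (p : G.Walk a b) : Prop :=
  p.IsPath ∧ ∀ x y, s(x, y) ∈ p.edges → IsCrowded F K x y

structure IsSpine (K P : Set V) : Prop where
  nonempty : P.Nonempty
  subset : P ⊆ K
  ncard_adj_le_two : ∀ v ∈ P, {w ∈ P | G.Adj v w}.ncard ≤ 2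
  reachable : ∀ a ∈ P, ∀ b ∈ P, (G.restrict P).Reachable a b
  not_isCrowded : ∀ z ∈ P, ∀ y ∉ P, ¬ IsCrowded F K z y

variable {F} {K : Set V} {a b y : V} {p : G.Walk a b}

lemma IsCrowdedPath.reverse (hp : IsCrowdedPath F K p) : IsCrowdedPath F K p.reverse :=
  ⟨hp.1.reverse, fun x y h ↦ hp.2 x y (by simpa using h)⟩

lemma IsCrowdedPath.cons (hp : IsCrowdedPath F K p) (hy : y ∉ p.support)
    (hya : IsCrowded F K y a) (hay : IsCrowded F K a y) :
    IsCrowdedPath F K (Walk.cons hya.adj p) := by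
  refine ⟨(Walk.cons_isPath_iff _ _).mpr ⟨hp.1, hy⟩, fun x w h ↦ ?_⟩
  rw [Walk.edges_cons, List.mem_cons] at h
  rcases h with h | h
  · rcases Sym2.eq_iff.mp h with ⟨rfl, rfl⟩ | ⟨rfl, rfl⟩ <;> assumption
  · exact hp.2 x w h

lemma IsCrowdedPath.exists_length_eq_succ (hG : G.IsAcyclic) (hp : IsCrowdedPath F K p)
    (hnil : ¬ p.Nil) (hy : y ∉ p.support) (hay : IsCrowded F K a y) :
    ∃ (a' b' : V) (q : G.Walk a' b'), IsCrowdedPath F K q ∧ q.length = p.length + 1 := by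
  have hsnd : IsCrowded F K a p.snd :=
    hp.2 _ _ (Walk.adj_toSubgraph_iff_mem_edges.mp (p.toSubgraph_adj_snd hnil))
  have hya : IsCrowded F K y a :=
    hsnd.isCrowded_of_adj hG hay.mem_right hay.adj.symm
      fun h ↦ hy (h ▸ p.getVert_mem_support 1)
  exact ⟨y, b, _, hp.cons hy hya hay, rfl⟩

lemma isSpine_singleton {v : V} (hv : v ∈ K) (h : ∀ y, ¬ IsCrowded F K v y) :
    IsSpine F K {v} where
  nonempty := Set.singleton_nonempty v
  subset := Set.singleton_subset_iff.mpr hv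
  ncard_adj_le_two _ _ := (Set.ncard_le_ncard (Set.sep_subset _ _)).trans (by simp)
  reachable _ ha _ hb := by rw [ha, hb]
  not_isCrowded _ hz _ _ := by rw [hz]; exact h _

/-- A crowded edge hanging from an end of a longest crowded path would extend it, and one
hanging from an inner vertex would be the third crowded edge there. -/
lemma IsCrowdedPath.isSpine [Finite V] (hG : G.IsAcyclic)
    (hdeg : ∀ v : V, (G.neighborSet v).ncard ≠ 1 → 4 ≤ (G.neighborSet v).ncard)
    (hF : ∀ i, (F i).Connected) (hF3 : ∀ i, ∀ v : V, ((F i).neighborSet v).ncard ≤ 3)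
    (hcov : ∀ e ∈ G.edgeSet, ∃ i, e ∈ (F i).edgeSet)
    (hp : IsCrowdedPath F K p) (hnil : ¬ p.Nil)
    (hmax : ∀ (a' b' : V) (q : G.Walk a' b'), IsCrowdedPath F K q → q.length ≤ p.length) :
    IsSpine F K {v | v ∈ p.support} where
  nonempty := ⟨a, p.start_mem_support⟩
  subset v hv := by
    obtain ⟨e, he, hve⟩ := (Walk.mem_support_iff_exists_mem_edges_of_not_nil hnil).mp hv
    obtain ⟨w, rfl⟩ := Sym2.mem_iff_exists.mp hve
    exact (hp.2 v w he).mem_left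
  ncard_adj_le_two _ := hG.ncard_adj_mem_support_le_two hp.1
  reachable _ ha _ hb := p.reachable_restrict_support ha hb
  not_isCrowded z hz y hy hzy := by
    obtain ⟨i, rfl, hi⟩ := Walk.mem_support_iff_exists_getVert.mp hz
    have hlen := Walk.not_nil_iff_lt_length.mp hnil
    by_cases hi0 : i = 0
    · subst hi0
      rw [Walk.getVert_zero] at hzy
      obtain ⟨_, _, q, hq, hql⟩ := hp.exists_length_eq_succ hG hnil hy hzy
      have := hmax _ _ q hq
      omega
    by_cases hil : i = p.length
    · subst hil
      rw [Walk.getVert_length] at hzy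
      obtain ⟨_, _, q, hq, hql⟩ := hp.reverse.exists_length_eq_succ hG
        (Walk.nil_reverse.not.mpr hnil) (by simpa using hy) hzy
      have := hmax _ _ q hq
      simp only [Walk.length_reverse] at hql
      omega
    have hprev : IsCrowded F K (p.getVert i) (p.getVert (i - 1)) := by
      refine hp.2 _ _ (Walk.adj_toSubgraph_iff_mem_edges.mp ?_)
      have := p.toSubgraph_adj_getVert (i := i - 1) (by omega)
      rwa [Nat.sub_add_cancel (by omega), Subgraph.adj_comm] at this
    have hnext : IsCrowded F K (p.getVert i) (p.getVert (i + 1)) :=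
      hp.2 _ _ (Walk.adj_toSubgraph_iff_mem_edges.mp (p.toSubgraph_adj_getVert (by omega)))
    have hne : p.getVert (i - 1) ≠ p.getVert (i + 1) := fun h ↦ by
      have := hp.1.getVert_injOn (by simp only [Set.mem_ofPred_eq]; omega)
        (by simp only [Set.mem_ofPred_eq]; omega) h
      omega
    have hy' (j : ℕ) : p.getVert j ≠ y := fun h ↦ hy (h ▸ p.getVert_mem_support j)
    exact not_isCrowded_three hG hdeg hF hF3 hcov hprev hnext hzy hne (hy' _) (hy' _)

end Spine

variable {F : ι → G.Subgraph}

lemma exists_isSpine [Fintype V] (hG : G.IsAcyclic)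
    (hdeg : ∀ v : V, (G.neighborSet v).ncard ≠ 1 → 4 ≤ (G.neighborSet v).ncard)
    (hF : ∀ i, (F i).Connected) (hF3 : ∀ i, ∀ v : V, ((F i).neighborSet v).ncard ≤ 3)
    (hcov : ∀ e ∈ G.edgeSet, ∃ i, e ∈ (F i).edgeSet) {K : Set V} (hK : K.Nonempty) :
    ∃ P, IsSpine F K P := by
  classical
  rcases exists_not_isCrowded_or_isCrowded_swap hG hK with ⟨v, hv, h⟩ | ⟨x, y, hxy, hyx⟩
  · exact ⟨{v}, isSpine_singleton hv h⟩
  let L (n : ℕ) : Prop := ∃ (a b : V) (p : G.Walk a b), IsCrowdedPath F K p ∧ p.length = n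
  have hL (n : ℕ) (hn : L n) : n ≤ Fintype.card V := by
    obtain ⟨_, _, p, hp, rfl⟩ := hn
    exact hp.1.length_lt.le
  have hL₁ : L 1 := ⟨x, y, hxy.adj.toWalk, ⟨hxy.adj.isPath_toWalk, fun u w h ↦ by
    rcases Sym2.eq_iff.mp (by simpa using h) with ⟨rfl, rfl⟩ | ⟨rfl, rfl⟩ <;> assumption⟩, rfl⟩
  obtain ⟨a, b, p, hp, hlen⟩ := Nat.findGreatest_spec (hL 1 hL₁) hL₁
  refine ⟨_, hp.isSpine hG hdeg hF hF3 hcov ?_ fun a' b' q hq ↦ ?_⟩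
  · rw [Walk.not_nil_iff_lt_length, hlen]
    exact Nat.le_findGreatest (hL 1 hL₁) hL₁
  · rw [hlen]
    exact Nat.le_findGreatest (hL _ ⟨a', b', q, hq, rfl⟩) ⟨a', b', q, hq, rfl⟩

section SpineUnion

variable (G) in
def componentIn (S : Set V) (a : V) : Set V := {v | (G.restrict S).Reachable a v}

lemma componentIn_eq {S : Set V} {a b : V} (h : (G.restrict S).Reachable a b) :
    G.componentIn S a = G.componentIn S b :=
  Set.ext fun _ ↦ ⟨h.symm.trans, h.trans⟩

variable (G) in
def spineUnion (S : Set V) (f : Set V → Set V) : Set V := {v ∈ S | v ∈ f (G.componentIn S v)}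

variable {S : Set V} {f : Set V → Set V}

lemma mem_spineUnion_iff {a v : V} (ha : a ∈ S) (hv : v ∈ G.componentIn S a) :
    v ∈ G.spineUnion S f ↔ v ∈ f (G.componentIn S a) := by
  rw [spineUnion, Set.mem_sep_iff, ← componentIn_eq hv]
  exact and_iff_right (hv.mem_of_restrict ha)

lemma ncard_adj_spineUnion_le_two [Finite V]
    (hf : ∀ a ∈ S, IsSpine F (G.componentIn S a) (f (G.componentIn S a)))
    {v : V} (hv : v ∈ G.spineUnion S f) : {w ∈ G.spineUnion S f | G.Adj v w}.ncard ≤ 2 := by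
  refine le_trans (Set.ncard_le_ncard (t := {w ∈ f (G.componentIn S v) | G.Adj v w}) ?_)
    ((hf v hv.1).ncard_adj_le_two v hv.2)
  rintro w ⟨hw, hvw⟩
  exact ⟨(mem_spineUnion_iff hv.1 (Adj.reachable (G := G.restrict S) ⟨hv.1, hw.1, hvw⟩)).mp hw,
    hvw⟩

lemma reachable_restrict_spineUnion
    (hf : ∀ a ∈ S, IsSpine F (G.componentIn S a) (f (G.componentIn S a)))
    {a b : V} (ha : a ∈ G.spineUnion S f) (hb : b ∈ G.spineUnion S f)
    (hab : (G.restrict S).Reachable a b) : (G.restrict (G.spineUnion S f)).Reachable a b := by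
  have hsub : f (G.componentIn S a) ⊆ G.spineUnion S f := fun v hv ↦
    (mem_spineUnion_iff ha.1 ((hf a ha.1).subset hv)).mpr hv
  refine ((hf a ha.1).reachable a ha.2 b ?_).mono (restrict_mono hsub)
  exact (mem_spineUnion_iff ha.1 hab).mp hb

/-- The component `C` of `a` once the spines are deleted hangs from the spine of `K` by an edge
`zy` with `C ⊆ K ∩ branch z y`; as `zy` is not crowded, `C` misses a member of `F` meeting `K`. -/
lemma ncard_meeting_componentIn_diff_lt [Finite ι]
    (hf : ∀ a ∈ S, IsSpine F (G.componentIn S a) (f (G.componentIn S a)))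
    {a : V} (ha : a ∈ S \ G.spineUnion S f) :
    (meeting F (G.componentIn (S \ G.spineUnion S f) a)).ncard <
      (meeting F (G.componentIn S a)).ncard := by
  set U := G.spineUnion S f
  set K := G.componentIn S a
  set C := G.componentIn (S \ U) a
  have hCK : C ⊆ K := fun v hv ↦ hv.mono (restrict_mono Set.sdiff_subset)
  have hCU (v : V) (hv : v ∈ C) : v ∉ U := (hv.mem_of_restrict ha).2
  obtain ⟨p, hp⟩ := (hf a ha.1).nonempty
  have hpK : p ∈ K := (hf a ha.1).subset hp
  obtain ⟨q⟩ := id hpK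
  obtain ⟨d, -, hy, hz⟩ := q.exists_boundary_dart C (Reachable.refl a)
    fun h ↦ hCU p h ((mem_spineUnion_iff ha.1 hpK).mpr hp)
  obtain ⟨hyS, hzS, hyz⟩ := d.adj
  have hyK : d.fst ∈ K := hCK hy
  have hzK : d.snd ∈ K := hyK.trans d.adj.reachable
  have hzU : d.snd ∈ U := by
    by_contra hzU
    exact hz (hy.trans (Adj.reachable ⟨⟨hyS, hCU _ hy⟩, ⟨hzS, hzU⟩, hyz⟩))
  have hnc := (hf a ha.1).not_isCrowded _ ((mem_spineUnion_iff ha.1 hzK).mp hzU) _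
    fun h ↦ hCU _ hy ((mem_spineUnion_iff ha.1 hyK).mpr h)
  obtain ⟨i, hiK, hi⟩ := Set.not_subset.mp fun h ↦ hnc ⟨hzK, hyK, hyz.symm, h⟩
  have hCb : C ⊆ K ∩ G.branch d.snd d.fst := fun v hv ↦
    ⟨hCK hv, mem_branch_of_reachable_restrict (fun h ↦ h.2 hzU) (hy.symm.trans hv)⟩
  exact Set.ncard_lt_ncard ((Set.ssubset_iff_of_subset (meeting_mono F hCK)).mpr
    ⟨i, hiK, fun h ↦ hi (meeting_mono F hCb h)⟩)

end SpineUnion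

theorem pwLE_of_ncard_meeting_le [Fintype V] [Finite ι] (hG : G.IsAcyclic)
    (hdeg : ∀ v : V, (G.neighborSet v).ncard ≠ 1 → 4 ≤ (G.neighborSet v).ncard)
    (hF : ∀ i, (F i).Connected) (hF3 : ∀ i, ∀ v : V, ((F i).neighborSet v).ncard ≤ 3)
    (hcov : ∀ e ∈ G.edgeSet, ∃ i, e ∈ (F i).edgeSet) (k : ℕ) (S : Set V)
    (hS : ∀ a ∈ S, (meeting F (G.componentIn S a)).ncard ≤ k) : PwLE G k S := by
  induction k generalizing S with
  | zero =>
    intro a ha b hb hab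
    obtain ⟨i, hi⟩ := hcov s(a, b) hab
    have hi : i ∈ meeting F (G.componentIn S a) := ⟨a, ⟨b, hi⟩, Reachable.refl a⟩
    exact ((Set.ncard_pos (Set.toFinite _)).mpr ⟨i, hi⟩).ne' (Nat.le_zero.mp (hS a ha))
  | succ k ih =>
    choose! f hf using fun (C : Set V) (hC : C.Nonempty) ↦ exists_isSpine hG hdeg hF hF3 hcov hC
    have hf' (a : V) (_ : a ∈ S) : IsSpine F (G.componentIn S a) (f (G.componentIn S a)) :=
      hf _ ⟨a, Reachable.refl a⟩
    refine ⟨G.spineUnion S f, Set.sep_subset _ _, fun v hv ↦ ncard_adj_spineUnion_le_two hf' hv,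
      fun a ha b hb hab ↦ (reachable_iff_reflTransGen a b).mp
        (reachable_restrict_spineUnion hf' ha hb ((reachable_iff_reflTransGen a b).mpr hab)),
      ih _ fun a ha ↦ ?_⟩
    have := ncard_meeting_componentIn_diff_lt hf' ha
    have := hS a ha.1
    omega

end SimpleGraph

/-- Let `T` be a tree in which every non-leaf vertex has degree at
least 4, and suppose `E(T)` can be covered by `c` connected subtrees of maximum degree
at most 3.  Then the pathwidth of `T` is at most `c`. -/
theorem pathwidth_le_of_cover {V : Type*} [Fintype V] (G : SimpleGraph V)
    (hT : G.IsTree)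
    (hdeg : ∀ v : V, (G.neighborSet v).ncard ≠ 1 → 4 ≤ (G.neighborSet v).ncard)
    (c : ℕ) (F : Fin c → G.Subgraph)
    (hF : ∀ i, (F i).Connected ∧ ∀ v : V, ((F i).neighborSet v).ncard ≤ 3)
    (hcov : ∀ e ∈ G.edgeSet, ∃ i, e ∈ (F i).edgeSet) :
    PwLE G c Set.univ := by
  refine G.pwLE_of_ncard_meeting_le hT.isAcyclic hdeg (fun i ↦ (hF i).1) (fun i ↦ (hF i).2)
    hcov c Set.univ fun a _ ↦ ?_
  calc _ ≤ (Set.univ : Set (Fin c)).ncard := Set.ncard_le_ncard (Set.subset_univ _)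
    _ = c := by simp
end

section
/- For all integers k ≥ d ≥ 1 and n₁,…,n_k ≥ 0, the minimum number of pairwise disjoint cliques, each with at most d vertices, needed to partition the vertex set of the complete k-partite graph K⟨n₁,…,n_k⟩ equals max{ max_i n_i , ⌈(Σ_i n_i)/d⌉ }. -/
/-!
Each clique meets a colour class at most once, so `m` cliques force `n i ≤ m`; cliques of size
at most `d` force `∑ i, n i ≤ m * d`. Conversely, for `m` satisfying both bounds, list the
vertices class by class and put the vertex in position `x` into clique `x % m`: a class occupies
at most `m` consecutive positions, hence distinct cliques, and below `∑ i, n i ≤ m * d` each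
residue modulo `m` occurs at most `d` times.
-/

open Finset Function

section Cover

variable {V : Type*} {m d : ℕ} {C : Fin m → Finset V}

theorem card_le_mul_of_forall_card_le [Fintype V] (hcard : ∀ j, #(C j) ≤ d)
    (hcover : ∀ v, ∃ j, v ∈ C j) : Fintype.card V ≤ m * d := by
  classical
  calc Fintype.card V = #(univ : Finset V) := rfl
    _ ≤ #(univ.biUnion C) := card_le_card fun v _ =>
        mem_biUnion.2 ((hcover v).imp fun j hj => ⟨mem_univ j, hj⟩)
    _ ≤ ∑ j, #(C j) := card_biUnion_le
    _ ≤ ∑ _j : Fin m, d := sum_le_sum fun j _ => hcard j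
    _ = m * d := by simp

theorem card_le_of_forall_rainbow {κ α : Type*} [Fintype α] (c : V → κ)
    (hrainbow : ∀ j, ∀ u ∈ C j, ∀ v ∈ C j, u ≠ v → c u ≠ c v) (hcover : ∀ v, ∃ j, v ∈ C j)
    {f : α → V} (hf : Injective f) (hc : ∀ a b, c (f a) = c (f b)) : Fintype.card α ≤ m := by
  choose g hg using fun a => hcover (f a)
  have hg_inj : Injective g := fun a b hab => by
    by_contra hne
    exact hrainbow (g a) (f a) (hg a) (f b) (hab ▸ hg b) (hf.ne hne) (hc a b)
  simpa using Fintype.card_le_of_injective g hg_inj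

end Cover

theorem Nat.card_filter_range_mod_eq_le {N m d : ℕ} (h : N ≤ m * d) (j : ℕ) :
    #{x ∈ range N | x % m = j} ≤ d := by
  have hmaps : Set.MapsTo (· / m) ({x ∈ range N | x % m = j} : Finset ℕ) (range d) :=
      fun x hx => by
    simp only [coe_filter, mem_range, Set.mem_ofPred_eq] at hx
    exact mem_range.2 (Nat.div_lt_of_lt_mul (hx.1.trans_le h))
  have hinj : Set.InjOn (· / m) ({x ∈ range N | x % m = j} : Finset ℕ) :=
      fun x hx y hy hxy => by
    simp only [coe_filter, Set.mem_ofPred_eq] at hx hy hxy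
    rw [← Nat.div_add_mod x m, ← Nat.div_add_mod y m, hxy, hx.2, hy.2]
  simpa using card_le_card_of_injOn _ hmaps hinj

section RoundRobin

variable {k m : ℕ} {n : Fin k → ℕ}

theorem finSigmaFinEquiv_mod_injective {i : Fin k} (hi : n i ≤ m) :
    Injective fun a : Fin (n i) => (finSigmaFinEquiv (⟨i, a⟩ : Σ i, Fin (n i)) : ℕ) % m := by
  obtain ⟨s, hs⟩ : ∃ s, ∀ a : Fin (n i), (finSigmaFinEquiv (⟨i, a⟩ : Σ i, Fin (n i)) : ℕ) = s + a :=
    ⟨∑ j : Fin i, n (Fin.castLE i.2.le j), fun a => finSigmaFinEquiv_apply _⟩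
  have hmem : ∀ a : Fin (n i), s + a ∈ Ico s (s + m) := fun a => by
    have := a.2
    simp only [mem_Ico]
    omega
  intro a b hab
  simp only [hs] at hab
  exact Fin.ext (Nat.add_left_cancel (Nat.mod_injOn_Ico s m (hmem a) (hmem b) hab))

theorem exists_mod_clique_partition {d : ℕ} (hn : ∀ i, n i ≤ m) (hN : ∑ i, n i ≤ m * d) :
    ∃ C : Fin m → Finset (Σ i, Fin (n i)),
      (∀ j, #(C j) ≤ d ∧ ∀ u ∈ C j, ∀ v ∈ C j, u ≠ v → u.1 ≠ v.1) ∧ ∀ v, ∃! j, v ∈ C j := by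
  let pos : (Σ i, Fin (n i)) → ℕ := fun v => finSigmaFinEquiv v
  have hpos_inj : Injective pos := Fin.val_injective.comp finSigmaFinEquiv.injective
  refine ⟨fun j => {v | pos v % m = j}, fun j => ⟨?_, ?_⟩, fun v => ?_⟩
  · have hmaps : Set.MapsTo pos ({v | pos v % m = j} : Finset _)
        ({x ∈ range (∑ i, n i) | x % m = j} : Finset ℕ) := fun v hv => by
      simp only [coe_filter, mem_univ, true_and, Set.mem_ofPred_eq, mem_range] at hv ⊢
      exact ⟨(finSigmaFinEquiv v).2, hv⟩
    exact (card_le_card_of_injOn pos hmaps hpos_inj.injOn).trans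
      (Nat.card_filter_range_mod_eq_le hN j)
  · rintro ⟨i, a⟩ hu ⟨i', b⟩ hv hne (rfl : i = i')
    simp only [mem_filter, mem_univ, true_and] at hu hv
    exact hne (congrArg _ (finSigmaFinEquiv_mod_injective (hn i) (hu.trans hv.symm)))
  · have hm : 0 < m := v.2.pos.trans_le (hn v.1)
    refine ⟨⟨pos v % m, Nat.mod_lt _ hm⟩, by simp, fun j hj => Fin.ext ?_⟩
    simp only [mem_filter, mem_univ, true_and] at hj
    exact hj.symm

end RoundRobin

theorem completeMultipartite_clique_partition_general (k d : ℕ) (hd : 1 ≤ d)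
    (n : Fin k → ℕ) :
    IsLeast {m : ℕ | ∃ C : Fin m → Finset (Σ i : Fin k, Fin (n i)),
        (∀ j, (C j).card ≤ d ∧
          ∀ u ∈ C j, ∀ v ∈ C j, u ≠ v → (u : Σ i : Fin k, Fin (n i)).1 ≠ v.1) ∧
        (∀ v : Σ i : Fin k, Fin (n i), ∃! j, v ∈ C j)}
      (max (Finset.univ.sup n) ((∑ i, n i + d - 1) / d)) := by
  have hceil : ∀ m, (∑ i, n i + d - 1) / d ≤ m ↔ ∑ i, n i ≤ m * d := fun m => by
    rw [← Nat.ceilDiv_eq_add_pred_div, ceilDiv_le_iff_le_mul hd, mul_comm]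
  refine ⟨exists_mod_clique_partition (fun i => (le_sup (mem_univ i)).trans (le_max_left _ _))
    ((hceil _).1 (le_max_right _ _)), ?_⟩
  rintro m ⟨C, hC, hpart⟩
  have hcover : ∀ v, ∃ j, v ∈ C j := fun v => (hpart v).exists
  refine max_le (Finset.sup_le fun i _ => ?_) ((hceil m).2 ?_)
  · simpa using card_le_of_forall_rainbow Sigma.fst (fun j => (hC j).2) hcover
      sigma_mk_injective (fun (_ _ : Fin (n i)) => rfl)
  · simpa [Fintype.card_sigma] using card_le_mul_of_forall_card_le (fun j => (hC j).1) hcover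

/-- For all integers `k ≥ d ≥ 1` and `n₁, …, n_k ≥ 0`, the minimum
number of pairwise-disjoint cliques, each with at most `d` vertices, needed to
partition the vertex set of the complete `k`-partite graph `K⟨n₁,…,n_k⟩` equals
`max (max_i n_i) ⌈(Σ_i n_i)/d⌉`.  Vertices are pairs `⟨i, a⟩` with `a : Fin (n i)`,
and two vertices are adjacent iff their first components differ, so a clique is a
set of vertices with pairwise distinct first components. -/
theorem completeMultipartite_clique_partition (k d : ℕ) (hd : 1 ≤ d) (hdk : d ≤ k)
    (n : Fin k → ℕ) :
    IsLeast {m : ℕ | ∃ C : Fin m → Finset (Σ i : Fin k, Fin (n i)),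
        (∀ j, (C j).card ≤ d ∧
          ∀ u ∈ C j, ∀ v ∈ C j, u ≠ v → (u : Σ i : Fin k, Fin (n i)).1 ≠ v.1) ∧
        (∀ v : Σ i : Fin k, Fin (n i), ∃! j, v ∈ C j)}
      (max (Finset.univ.sup n) ((∑ i, n i + d - 1) / d)) :=
  completeMultipartite_clique_partition_general k d hd n
end

section
/- Fix integers A, B ≥ 1 and d ≥ 2 with A ≤ B and (d−2)B ≤ (d−1)A. If non-negative integers x, y₁, y₂, z satisfy (d−2)x + (d−1)(y₁+y₂) + dz ≥ A, (d−1)(x+y₁) ≥ B, and (d−1)(x+y₂) ≥ B, then x + y₁ + y₂ + z ≥ ⌈A/d + (2/d)⌈B/(d−1)⌉⌉. Moreover this bound is achieved by x = ⌈B/(d−1)⌉, y₁ = y₂ = 0, z = ⌈(A − x(d−2))/d⌉. -/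
/-!
Since `(d-2)x + (d-1)(y₁+y₂) + dz + (x+y₁) + (x+y₂) = d(x+y₁+y₂+z)` and each of `x+y₁`, `x+y₂`
is an integer at least `B/(d-1)`, hence at least `x₀ = ⌈B/(d-1)⌉`, every feasible point has
`d(x+y₁+y₂+z) ≥ A + 2x₀`. The point `(x₀, 0, 0, z₀)` with `z₀ = ⌈(A - (d-2)x₀)/d⌉` has value
`⌈(A + 2x₀)/d⌉`; the hypothesis `(d-2)B ≤ (d-1)A` keeps `A - (d-2)x₀ > -d`, so that `z₀ ≥ 0`.
-/

section CeilIntCastDiv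

variable {K : Type*} [Field K] [LinearOrder K] [IsStrictOrderedRing K] [FloorRing K] {a c : ℤ}

theorem ceil_intCast_div_le_iff (hc : 0 < c) {n : ℤ} : ⌈(a : K) / c⌉ ≤ n ↔ a ≤ c * n := by
  rw [Int.ceil_le, div_le_iff₀ (Int.cast_pos.mpr hc), mul_comm]
  exact_mod_cast Iff.rfl

theorem lt_ceil_intCast_div_iff (hc : 0 < c) {n : ℤ} : n < ⌈(a : K) / c⌉ ↔ c * n < a := by
  simpa only [not_le] using (ceil_intCast_div_le_iff (K := K) hc).not

theorem le_mul_ceil_intCast_div (hc : 0 < c) : a ≤ c * ⌈(a : K) / c⌉ :=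
  (ceil_intCast_div_le_iff hc).1 le_rfl

theorem mul_ceil_intCast_div_sub_one_lt (hc : 0 < c) : c * (⌈(a : K) / c⌉ - 1) < a :=
  (lt_ceil_intCast_div_iff hc).1 (sub_one_lt _)

end CeilIntCastDiv

theorem integerProgram_lower_bound {A d x₀ x y₁ y₂ z : ℤ} (hd : 0 < d)
    (hA : A ≤ (d - 2) * x + (d - 1) * (y₁ + y₂) + d * z)
    (h₁ : x₀ ≤ x + y₁) (h₂ : x₀ ≤ x + y₂) :
    ⌈((A + 2 * x₀ : ℤ) : ℚ) / d⌉ ≤ x + y₁ + y₂ + z := by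
  rw [ceil_intCast_div_le_iff hd]
  linear_combination hA + h₁ + h₂

theorem integerProgram_residual_gt {A B d x₀ : ℤ} (hd : 2 ≤ d)
    (hdAB : (d - 2) * B ≤ (d - 1) * A) (hx₀ : (d - 1) * (x₀ - 1) < B) :
    -d < A - (d - 2) * x₀ := by
  have hx₀' : (d - 1) * x₀ ≤ B + (d - 2) := by linarith
  have key : (d - 1) * ((d - 2) * x₀) < (d - 1) * (A + d) := calc
    (d - 1) * ((d - 2) * x₀) = (d - 2) * ((d - 1) * x₀) := by ring
    _ ≤ (d - 2) * (B + (d - 2)) := mul_le_mul_of_nonneg_left hx₀' (by omega)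
    _ ≤ (d - 1) * A + (d - 2) * (d - 2) := by linarith
    _ < (d - 1) * (A + d) := by nlinarith
  linarith [lt_of_mul_lt_mul_left key (by omega : (0 : ℤ) ≤ d - 1)]

theorem integerProgram_solution_general (A B d : ℤ) (hB : 1 ≤ B) (hd : 2 ≤ d)
    (hdAB : (d - 2) * B ≤ (d - 1) * A) :
    (∀ x y₁ y₂ z : ℤ, 0 ≤ x → 0 ≤ y₁ → 0 ≤ y₂ → 0 ≤ z →
      A ≤ (d - 2) * x + (d - 1) * (y₁ + y₂) + d * z →
      B ≤ (d - 1) * (x + y₁) →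
      B ≤ (d - 1) * (x + y₂) →
      ⌈(A : ℚ) / d + 2 / d * (⌈(B : ℚ) / (d - 1)⌉ : ℚ)⌉ ≤ x + y₁ + y₂ + z) ∧
    (let x : ℤ := ⌈(B : ℚ) / (d - 1)⌉
     let z : ℤ := ⌈((A : ℚ) - x * (d - 2)) / d⌉
     0 ≤ x ∧ 0 ≤ z ∧
       A ≤ (d - 2) * x + (d - 1) * (0 + 0) + d * z ∧
       B ≤ (d - 1) * (x + 0) ∧
       x + 0 + 0 + z = ⌈(A : ℚ) / d + 2 / d * (⌈(B : ℚ) / (d - 1)⌉ : ℚ)⌉) := by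
  have hd₀ : 0 < d := by omega
  have hd₁ : 0 < d - 1 := by omega
  set x₀ := ⌈(B : ℚ) / (d - 1)⌉ with hx₀
  replace hx₀ : x₀ = ⌈((B : ℤ) : ℚ) / ((d - 1 : ℤ) : ℚ)⌉ := by push_cast; rfl
  have hobj : ⌈(A : ℚ) / d + 2 / d * x₀⌉ = ⌈((A + 2 * x₀ : ℤ) : ℚ) / d⌉ := by
    push_cast; ring_nf
  have hBx₀ : B ≤ (d - 1) * x₀ := hx₀ ▸ le_mul_ceil_intCast_div hd₁
  have hx₀_le {n : ℤ} (h : B ≤ (d - 1) * n) : x₀ ≤ n := hx₀ ▸ (ceil_intCast_div_le_iff hd₁).2 h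
  refine ⟨fun x y₁ y₂ z _ _ _ _ hA h₁ h₂ => ?_, ?_⟩
  · rw [hobj]
    exact integerProgram_lower_bound hd₀ hA (hx₀_le h₁) (hx₀_le h₂)
  · dsimp only
    set z₀ := ⌈((A : ℚ) - x₀ * (d - 2)) / d⌉ with hz₀
    replace hz₀ : z₀ = ⌈((A - (d - 2) * x₀ : ℤ) : ℚ) / d⌉ := by
      rw [hz₀]; congr 2; push_cast; ring
    have hres := integerProgram_residual_gt hd hdAB
      (hx₀ ▸ mul_ceil_intCast_div_sub_one_lt hd₁ : (d - 1) * (x₀ - 1) < B)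
    refine ⟨by nlinarith, ?_, ?_, by simpa using hBx₀, ?_⟩
    · have : -1 < z₀ := hz₀ ▸ (lt_ceil_intCast_div_iff hd₀).2 (by linarith)
      omega
    · linarith [hz₀ ▸ le_mul_ceil_intCast_div hd₀ (a := A - (d - 2) * x₀) (K := ℚ)]
    · rw [hobj, hz₀, add_zero, add_zero, add_comm, ← Int.ceil_add_intCast]
      congr 1; push_cast; field_simp; ring

/-- Fix integers `A, B ≥ 1` and `d ≥ 2` with `A ≤ B` and
`(d−2)B ≤ (d−1)A`.  Any non-negative integers `x, y₁, y₂, z` satisfying the three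
linear inequalities have `x + y₁ + y₂ + z ≥ ⌈A/d + (2/d)⌈B/(d−1)⌉⌉`, and this bound
is achieved by `x = ⌈B/(d−1)⌉`, `y₁ = y₂ = 0`, `z = ⌈(A − x(d−2))/d⌉`. -/
theorem integerProgram_solution (A B d : ℤ) (hA : 1 ≤ A) (hB : 1 ≤ B) (hd : 2 ≤ d)
    (hAB : A ≤ B) (hdAB : (d - 2) * B ≤ (d - 1) * A) :
    (∀ x y₁ y₂ z : ℤ, 0 ≤ x → 0 ≤ y₁ → 0 ≤ y₂ → 0 ≤ z →
      A ≤ (d - 2) * x + (d - 1) * (y₁ + y₂) + d * z →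
      B ≤ (d - 1) * (x + y₁) →
      B ≤ (d - 1) * (x + y₂) →
      ⌈(A : ℚ) / d + 2 / d * (⌈(B : ℚ) / (d - 1)⌉ : ℚ)⌉ ≤ x + y₁ + y₂ + z) ∧
    (let x : ℤ := ⌈(B : ℚ) / (d - 1)⌉
     let z : ℤ := ⌈((A : ℚ) - x * (d - 2)) / d⌉
     0 ≤ x ∧ 0 ≤ z ∧
       A ≤ (d - 2) * x + (d - 1) * (0 + 0) + d * z ∧
       B ≤ (d - 1) * (x + 0) ∧
       x + 0 + 0 + z = ⌈(A : ℚ) / d + 2 / d * (⌈(B : ℚ) / (d - 1)⌉ : ℚ)⌉) :=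
  integerProgram_solution_general A B d hB hd hdAB
end
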